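/- arXiv:1202.3826 — 10 statements merged into one kernel-verified Lean document; each statement's English description precedes it below -/
import Mathlib

section
/- Let F = G·H⁻¹ ∈ ℂ[[x₁,x₂]] where G = x₂(2x₂ − 1) and H = x₁ + x₂ − 1 (note H(0,0) = −1 ≠ 0). Then the diagonal coefficient F_{(0,0)} = 0, and for every n ≥ 1, the diagonal coefficient F_{(n,n)} equals the (n−1)-st Catalan number C_{n-1} = (1/n)·binom(2n−2, n−1). Equivalently, the Maclaurin coefficients of the algebraic function f(x₁) = (1 − √(1 − 4x₁))/2 satisfy f_n = F_{(n,n)} for all n ∈ ℕ. -/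
/-!
Over a field, `(x₀ + x₁ - 1)⁻¹ = -∑ binom(a + b, a) x₀^a x₁^b` by Pascal's rule. Since
`2x₁ - 1 ≡ 1 - 2x₀` modulo `x₀ + x₁ - 1`, this gives `F = x₁ (2 + (2x₀ - 1) P)` with `P` the
Pascal series, so `F_{(m+1, m+1)} = 2 binom(2m, m) - binom(2m + 1, m + 1)`, which is
`binom(2m, m) - binom(2m, m + 1) = C_m`.
-/

open Finsupp

theorem catalan_add_choose_eq_centralBinom (m : ℕ) :
    catalan m + (2 * m).choose (m + 1) = m.centralBinom := by
  have hchoose := Nat.choose_succ_right_eq (2 * m) m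
  rw [show 2 * m - m = m by omega, ← Nat.centralBinom_eq_two_mul_choose] at hchoose
  apply Nat.eq_of_mul_eq_mul_left m.succ_pos
  rw [mul_add, succ_mul_catalan_eq_centralBinom]
  linarith

namespace MvPowerSeries

section Semiring

variable {σ R : Type*} [Semiring R]

theorem coeff_single_add_X_mul (i : σ) (d : σ →₀ ℕ) (φ : MvPowerSeries σ R) :
    coeff (single i 1 + d) (X i * φ) = coeff d φ := by
  rw [X, coeff_add_monomial_mul, one_mul]

theorem coeff_X_mul_of_apply_eq_zero {i : σ} {d : σ →₀ ℕ} (h : d i = 0)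
    (φ : MvPowerSeries σ R) : coeff d (X i * φ) = 0 := by
  rw [X, coeff_monomial_mul, if_neg]
  simp [single_le_iff, h]

theorem coeff_X_zero_mul (a b : ℕ) (φ : MvPowerSeries (Fin 2) R) :
    coeff (single 0 (a + 1) + single 1 b) (X 0 * φ) = coeff (single 0 a + single 1 b) φ := by
  rw [← coeff_single_add_X_mul 0 _ φ, single_add, add_comm (single 0 a), add_assoc]

theorem coeff_X_one_mul (a b : ℕ) (φ : MvPowerSeries (Fin 2) R) :
    coeff (single 0 a + single 1 (b + 1)) (X 1 * φ) = coeff (single 0 a + single 1 b) φ := by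
  rw [← coeff_single_add_X_mul 1 _ φ, single_add, add_comm (single 1 b), add_left_comm]

variable (R) in
def pascalSeries : MvPowerSeries (Fin 2) R := fun d => ((d 0 + d 1).choose (d 0) : R)

theorem coeff_pascalSeries (a b : ℕ) :
    coeff (single 0 a + single 1 b) (pascalSeries R) = ((a + b).choose a : R) := by
  simp [pascalSeries, coeff_apply]

theorem pascalSeries_eq_one_add : pascalSeries R = 1 + (X 0 + X 1) * pascalSeries R := by
  ext d
  obtain ⟨a, b, rfl⟩ : ∃ a b : ℕ, d = single 0 a + single 1 b :=
    ⟨d 0, d 1, by ext i; fin_cases i <;> simp⟩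
  rw [map_add, add_mul, map_add]
  rcases a with _ | a <;> rcases b with _ | b
  · simp only [coeff_pascalSeries]
    simp
  · rw [coeff_X_one_mul, coeff_X_mul_of_apply_eq_zero (by simp), coeff_pascalSeries,
      coeff_pascalSeries, coeff_one, if_neg (by simp)]
    simp
  · rw [coeff_X_zero_mul, coeff_X_mul_of_apply_eq_zero (by simp), coeff_pascalSeries,
      coeff_pascalSeries, coeff_one, if_neg (by simp)]
    simp
  · rw [coeff_X_zero_mul, coeff_X_one_mul, coeff_pascalSeries, coeff_pascalSeries,
      coeff_pascalSeries, coeff_one, if_neg (by simp), zero_add, ← Nat.cast_add,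
      show a + 1 + (b + 1) = a + b + 1 + 1 by ring, Nat.choose_succ_succ']
    ring_nf

end Semiring

variable {k : Type*} [Field k]

theorem inv_X_add_X_sub_one : (X 0 + X 1 - 1 : MvPowerSeries (Fin 2) k)⁻¹ = -pascalSeries k := by
  rw [MvPowerSeries.inv_eq_iff_mul_eq_one (by simp)]
  linear_combination pascalSeries_eq_one_add (R := k)

theorem coeff_succ_succ_X_one_mul_two_X_one_sub_one_mul_inv (m : ℕ) :
    coeff (single 0 (m + 1) + single 1 (m + 1))
        (X 1 * (2 * X 1 - 1) * (X 0 + X 1 - 1)⁻¹ : MvPowerSeries (Fin 2) k) = catalan m := by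
  have hreduce : (X 1 * (2 * X 1 - 1) * (X 0 + X 1 - 1)⁻¹ : MvPowerSeries (Fin 2) k) =
      X 1 * (2 * (1 + X 0 * pascalSeries k) - pascalSeries k) := by
    rw [inv_X_add_X_sub_one]
    linear_combination (2 * X 1 : MvPowerSeries (Fin 2) k) * pascalSeries_eq_one_add (R := k)
  rw [hreduce, coeff_X_one_mul, map_sub, two_mul, map_add, map_add, coeff_X_zero_mul, coeff_one,
    if_neg (by simp), coeff_pascalSeries, coeff_pascalSeries, zero_add, ← two_mul m, ← two_mul,
    show m + 1 + m = 2 * m + 1 by ring, Nat.choose_succ_succ',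
    ← Nat.centralBinom_eq_two_mul_choose, ← catalan_add_choose_eq_centralBinom]
  push_cast
  ring

end MvPowerSeries

open MvPolynomial

/-- The Maclaurin coefficients of `f(x₁) = (1 - √(1-4x₁))/2` (the right-shifted Catalan
generating function) are the diagonal coefficients of `F = x₂(2x₂-1)/(x₁+x₂-1)`:
`F_{(0,0)} = 0` and `F_{(n,n)} = C_{n-1}` for `n ≥ 1`. -/
theorem catalan_shifted_diagonal
    (G H : MvPolynomial (Fin 2) ℂ)
    (hG : G = X 1 * (2 * X 1 - 1))
    (hH : H = X 0 + X 1 - 1)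
    (F : MvPowerSeries (Fin 2) ℂ)
    (hF : F = (G : MvPowerSeries (Fin 2) ℂ) * (H : MvPowerSeries (Fin 2) ℂ)⁻¹) :
    MvPowerSeries.coeff (Finsupp.equivFunOnFinite.symm ![0, 0]) F = 0 ∧
    ∀ n : ℕ, 1 ≤ n →
      MvPowerSeries.coeff (Finsupp.equivFunOnFinite.symm ![n, n]) F =
        (catalan (n - 1) : ℂ) := by
  have hG' : (G : MvPowerSeries (Fin 2) ℂ) = MvPowerSeries.X 1 * (2 * MvPowerSeries.X 1 - 1) := by
    rw [hG, ← coeToMvPowerSeries.ringHom_apply]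
    simp only [map_mul, map_sub, map_ofNat, map_one, coeToMvPowerSeries.ringHom_apply, coe_X]
  have hH' : (H : MvPowerSeries (Fin 2) ℂ) =
      MvPowerSeries.X 0 + MvPowerSeries.X 1 - 1 := by
    rw [hH, ← coeToMvPowerSeries.ringHom_apply]
    simp only [map_add, map_sub, map_one, coeToMvPowerSeries.ringHom_apply, coe_X]
  rw [hF, hG', hH']
  constructor
  · rw [show equivFunOnFinite.symm ![0, 0] = (0 : Fin 2 →₀ ℕ) by ext i; fin_cases i <;> rfl,
      mul_assoc, MvPowerSeries.coeff_zero_X_mul]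
  · rintro n hn
    obtain ⟨m, rfl⟩ : ∃ m, n = m + 1 := ⟨n - 1, by omega⟩
    rw [show equivFunOnFinite.symm ![m + 1, m + 1] = single 0 (m + 1) + single 1 (m + 1) by
        ext i; fin_cases i <;> simp,
      MvPowerSeries.coeff_succ_succ_X_one_mul_two_X_one_sub_one_mul_inv, Nat.add_sub_cancel]
end

section
/- The Catalan numbers satisfy the two-term asymptotic expansion: there exists a constant K > 0 and N ∈ ℕ such that for all n ≥ N, |C_{n-1} − 4^n·(1/(4√π · n^{3/2}) + 3/(32√π · n^{5/2}))| ≤ K·4^n·n^{-7/2}, where C_m = (1/(m+1))·binom(2m, m) is the m-th Catalan number. -/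
/-!
Put `q m = centralBinom m / 4 ^ m`, so that `C_m = 4 ^ m q m / (m + 1)`. By Wallis' product,
`q m ^ 2 (m + 1/4)` increases to `1 / π`. The shift `1/4` is chosen so that the increments
`q m ^ 2 / (16 (m + 1) ^ 2)` are `O(m⁻³)`: they are at most `(1/m² - 1/(m + 1)²) / (32 π)`,
and telescoping gives `π q m ^ 2 (m + 1/4) = 1 + O(m⁻²)`. Taking square roots,
`√(π (m + 1)) q m = 1 + 3 / (8 (m + 1)) + O(m⁻²)`, which is the claim for `n = m + 1`.
-/

open Real Filter Topology

noncomputable def centralBinomRatio (m : ℕ) : ℝ := (m.centralBinom : ℝ) / 4 ^ m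

lemma centralBinomRatio_pos (m : ℕ) : 0 < centralBinomRatio m := by
  unfold centralBinomRatio
  have := m.centralBinom_pos
  positivity

lemma centralBinomRatio_succ (m : ℕ) :
    centralBinomRatio (m + 1) = centralBinomRatio m * ((2 * m + 1) / (2 * m + 2)) := by
  have h : ((m + 1).centralBinom : ℝ) = 2 * (2 * m + 1) * m.centralBinom / (m + 1) := by
    rw [eq_div_iff (by positivity), mul_comm]
    exact_mod_cast m.succ_mul_centralBinom_succ
  unfold centralBinomRatio
  rw [h, pow_succ]
  field_simp
  ring

lemma catalan_eq_centralBinomRatio (m : ℕ) :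
    (catalan m : ℝ) = 4 ^ m * centralBinomRatio m / (m + 1) := by
  have h : ((m + 1 : ℕ) : ℝ) * catalan m = m.centralBinom := by
    exact_mod_cast succ_mul_catalan_eq_centralBinom m
  unfold centralBinomRatio
  rw [eq_div_iff (by positivity), mul_div_cancel₀ _ (by positivity), mul_comm]
  exact_mod_cast h

lemma centralBinomRatio_sq_mul_W (k : ℕ) :
    centralBinomRatio k ^ 2 * (2 * k + 1) * Wallis.W k = 1 := by
  induction k with
  | zero => simp [centralBinomRatio, Wallis.W]
  | succ k ih =>
    rw [Wallis.W_succ, centralBinomRatio_succ]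
    push_cast
    field_simp
    linear_combination (2 * (k : ℝ) + 3) * ih

lemma tendsto_centralBinomRatio_sq :
    Tendsto (fun k : ℕ ↦ centralBinomRatio k ^ 2 * (2 * k + 1)) atTop (𝓝 (2 / π)) := by
  have h : (fun k : ℕ ↦ centralBinomRatio k ^ 2 * (2 * k + 1)) = fun k ↦ (Wallis.W k)⁻¹ :=
    funext fun k ↦ eq_inv_of_mul_eq_one_left (centralBinomRatio_sq_mul_W k)
  rw [h, ← inv_div]
  exact Wallis.tendsto_W_nhds_pi_div_two.inv₀ (by positivity)

noncomputable def wallisTerm (m : ℕ) : ℝ := centralBinomRatio m ^ 2 * (m + 1 / 4)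

lemma tendsto_wallisTerm : Tendsto wallisTerm atTop (𝓝 (1 / π)) := by
  have hratio :
      Tendsto (fun k : ℕ ↦ ((k : ℝ) + 1 / 4) / (2 * k + 1)) atTop (𝓝 (1 / 2)) := by
    have h : (fun k : ℕ ↦ ((k : ℝ) + 1 / 4) / (2 * k + 1)) =
        fun k : ℕ ↦ (1 / 2 : ℝ) - 1 / (8 * k + 4) := by
      funext k
      field_simp
      ring
    have h8 : Tendsto (fun k : ℕ ↦ 8 * (k : ℝ) + 4) atTop atTop :=
      tendsto_atTop_add_const_right _ _ (tendsto_natCast_atTop_atTop.const_mul_atTop (by norm_num))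
    rw [h]
    simpa using (tendsto_const_nhds (x := (1 / 2 : ℝ))).sub
      ((tendsto_const_nhds (x := (1 : ℝ))).div_atTop h8)
  have h : wallisTerm =
      fun k ↦ centralBinomRatio k ^ 2 * (2 * k + 1) * ((k + 1 / 4) / (2 * k + 1)) := by
    funext k
    unfold wallisTerm
    field_simp
  rw [h, show (1 / π : ℝ) = 2 / π * (1 / 2) by ring]
  exact tendsto_centralBinomRatio_sq.mul hratio

lemma wallisTerm_succ (m : ℕ) :
    wallisTerm (m + 1) = wallisTerm m + centralBinomRatio m ^ 2 / (16 * (m + 1) ^ 2) := by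
  unfold wallisTerm
  rw [centralBinomRatio_succ]
  push_cast
  field_simp
  ring

lemma monotone_wallisTerm : Monotone wallisTerm := by
  refine monotone_nat_of_le_succ fun m ↦ ?_
  rw [wallisTerm_succ]
  exact le_add_of_nonneg_right (by positivity)

lemma wallisTerm_le (m : ℕ) : wallisTerm m ≤ 1 / π :=
  monotone_wallisTerm.ge_of_tendsto tendsto_wallisTerm m

lemma wallisTerm_succ_sub_le {m : ℕ} (hm : 0 < m) :
    wallisTerm (m + 1) - wallisTerm m ≤ 1 / (32 * π * m ^ 2) - 1 / (32 * π * (m + 1) ^ 2) := by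
  have hm' : (0 : ℝ) < m := by exact_mod_cast hm
  have hle : π * centralBinomRatio m ^ 2 * (4 * m + 1) ≤ 4 := by
    have := wallisTerm_le m
    rw [wallisTerm, le_div_iff₀ pi_pos] at this
    linarith
  have hkey : 2 * π * m ^ 2 * centralBinomRatio m ^ 2 ≤ 2 * m + 1 := by
    by_contra! h
    nlinarith [mul_le_mul_of_nonneg_left hle (by positivity : (0 : ℝ) ≤ 2 * m ^ 2),
      mul_lt_mul_of_pos_right h (by positivity : (0 : ℝ) < 4 * m + 1)]
  have hdiff : 1 / (32 * π * m ^ 2) - 1 / (32 * π * (m + 1) ^ 2) =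
      (2 * m + 1) / (32 * π * m ^ 2 * (m + 1) ^ 2) := by
    field_simp
    ring
  rw [wallisTerm_succ, add_sub_cancel_left, hdiff,
    div_le_div_iff₀ (by positivity) (by positivity)]
  nlinarith [mul_le_mul_of_nonneg_left hkey (by positivity : (0 : ℝ) ≤ 16 * (m + 1) ^ 2)]

lemma inv_pi_le_wallisTerm_add {m : ℕ} (hm : 0 < m) :
    1 / π ≤ wallisTerm m + 1 / (32 * π * m ^ 2) := by
  obtain ⟨k, rfl⟩ := Nat.exists_eq_add_of_lt hm
  set f : ℕ → ℝ := fun k ↦ wallisTerm (k + 1) + 1 / (32 * π * ((k + 1 : ℕ) : ℝ) ^ 2)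
  have hanti : Antitone f := antitone_nat_of_succ_le fun k ↦ by
    have := wallisTerm_succ_sub_le k.succ_pos
    simp only [f]
    push_cast at this ⊢
    linarith
  have hlim : Tendsto f atTop (𝓝 (1 / π)) := by
    rw [← add_zero (1 / π)]
    refine ((tendsto_add_atTop_iff_nat 1).mpr tendsto_wallisTerm).add ?_
    refine tendsto_const_nhds.div_atTop (Tendsto.const_mul_atTop (by positivity) ?_)
    exact (tendsto_pow_atTop two_ne_zero).comp
      (tendsto_natCast_atTop_atTop.comp (tendsto_add_atTop_nat 1))
  simpa [f] using hanti.le_of_tendsto hlim k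

lemma pi_mul_centralBinomRatio_sq_bounds {m : ℕ} (hm : 0 < m) :
    1 - 1 / (8 * (m + 1) ^ 2) ≤ π * centralBinomRatio m ^ 2 * (m + 1 / 4) ∧
      π * centralBinomRatio m ^ 2 * (m + 1 / 4) ≤ 1 := by
  have hm' : (1 : ℝ) ≤ m := by exact_mod_cast hm
  have hupper := wallisTerm_le m
  have hlower := inv_pi_le_wallisTerm_add hm
  rw [wallisTerm] at hupper hlower
  have hpi := pi_pos
  constructor
  · have hsmall : π * (1 / (32 * π * m ^ 2)) ≤ 1 / (8 * ((m : ℝ) + 1) ^ 2) := by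
      rw [mul_one_div, div_le_div_iff₀ (by positivity) (by positivity)]
      have hm2 : 8 * ((m : ℝ) + 1) ^ 2 ≤ 32 * m ^ 2 := by nlinarith
      nlinarith [mul_le_mul_of_nonneg_left hm2 hpi.le]
    have := mul_le_mul_of_nonneg_left hlower hpi.le
    rw [mul_add, mul_one_div_cancel hpi.ne'] at this
    linarith
  · rw [le_div_iff₀ hpi] at hupper
    linarith

lemma abs_sub_le_of_sq_mul_bounds {u ε : ℝ} (hu : 0 ≤ u) (hε : 0 ≤ ε) (hε' : ε ≤ 1 / 4)
    (hlo : 1 - ε ^ 2 / 8 ≤ u ^ 2 * (1 - 3 * ε / 4)) (hhi : u ^ 2 * (1 - 3 * ε / 4) ≤ 1) :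
    |u - (1 + 3 * ε / 8)| ≤ ε ^ 2 := by
  have hexp : (u ^ 2 - (1 + 3 * ε / 8) ^ 2) * (1 - 3 * ε / 4) =
      u ^ 2 * (1 - 3 * ε / 4) - 1 + 27 * ε ^ 2 / 64 + 27 * ε ^ 3 / 256 := by ring
  have hε3 : ε ^ 3 ≤ ε ^ 2 / 4 := by nlinarith
  have hsq_lo : 0 ≤ u ^ 2 - (1 + 3 * ε / 8) ^ 2 := by
    refine nonneg_of_mul_nonneg_left (b := 1 - 3 * ε / 4) ?_ (by linarith)
    nlinarith
  have hsq_hi : u ^ 2 - (1 + 3 * ε / 8) ^ 2 ≤ ε ^ 2 := by nlinarith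
  rw [abs_le]
  constructor <;> nlinarith

lemma abs_sqrt_pi_mul_centralBinomRatio_sub_le {m : ℕ} (hm : 3 ≤ m) :
    |√(π * (m + 1)) * centralBinomRatio m - (1 + 3 / (8 * (m + 1)))| ≤ 1 / (m + 1) ^ 2 := by
  have hm' : (3 : ℝ) ≤ m := by exact_mod_cast hm
  obtain ⟨hlo, hhi⟩ := pi_mul_centralBinomRatio_sq_bounds (m := m) (by omega)
  have hsq : (√(π * (m + 1)) * centralBinomRatio m) ^ 2 * (1 - 3 * (1 / (m + 1)) / 4) =
      π * centralBinomRatio m ^ 2 * (m + 1 / 4) := by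
    rw [mul_pow, sq_sqrt (by positivity)]
    field_simp
    ring
  have h := abs_sub_le_of_sq_mul_bounds (ε := 1 / (m + 1))
    (mul_nonneg (sqrt_nonneg _) (centralBinomRatio_pos m).le) (by positivity)
    (by rw [div_le_div_iff₀ (by positivity) (by positivity)]; linarith)
    (by convert hsq ▸ hlo using 2; field_simp) (hsq ▸ hhi)
  convert h using 3 <;> field_simp

lemma abs_catalan_sub_le {m : ℕ} (hm : 3 ≤ m) :
    |(catalan m : ℝ) - 4 ^ (m + 1) *
        (1 / (4 * √π * √(m + 1) ^ 3) + 3 / (32 * √π * √(m + 1) ^ 5))| ≤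
      4 ^ (m + 1) / √(m + 1) ^ 7 := by
  have hu := abs_sqrt_pi_mul_centralBinomRatio_sub_le hm
  rw [sqrt_mul pi_pos.le] at hu
  set s := √((m : ℝ) + 1)
  have hs2 : s ^ 2 = m + 1 := sq_sqrt (by positivity)
  have hs0 : 0 < s := by positivity
  have hpi : 1 ≤ 4 * √π := by
    have := one_le_sqrt.mpr (by linarith [pi_gt_three] : 1 ≤ π)
    linarith
  set q := centralBinomRatio m
  rw [← hs2] at hu
  have hdiff : (4 : ℝ) ^ m * q / s ^ 2 -
      4 ^ (m + 1) * (1 / (4 * √π * s ^ 3) + 3 / (32 * √π * s ^ 5)) =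
      4 ^ (m + 1) / (4 * √π * s ^ 3) * (√π * s * q - (1 + 3 / (8 * s ^ 2))) := by
    field_simp
    ring
  rw [catalan_eq_centralBinomRatio, ← hs2, hdiff, abs_mul, abs_of_pos (by positivity)]
  calc 4 ^ (m + 1) / (4 * √π * s ^ 3) * |√π * s * q - (1 + 3 / (8 * s ^ 2))|
      ≤ 4 ^ (m + 1) / (4 * √π * s ^ 3) * (1 / (s ^ 2) ^ 2) := by gcongr
    _ = 4 ^ (m + 1) / s ^ 7 / (4 * √π) := by field_simp
    _ ≤ 4 ^ (m + 1) / s ^ 7 := div_le_self (by positivity) hpi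

/-- Two-term asymptotic expansion of the Catalan numbers:
`C_{n-1} = 4^n (1/(4√π n^{3/2}) + 3/(32√π n^{5/2}) + O(n^{-7/2}))` as `n → ∞`. -/
theorem catalan_two_term_asymptotics :
    ∃ K : ℝ, 0 < K ∧ ∃ N : ℕ, ∀ n : ℕ, N ≤ n →
      |(catalan (n - 1) : ℝ) -
          (4 : ℝ) ^ n * (1 / (4 * Real.sqrt π * (n : ℝ) ^ ((3 : ℝ) / 2)) +
            3 / (32 * Real.sqrt π * (n : ℝ) ^ ((5 : ℝ) / 2)))| ≤
        K * (4 : ℝ) ^ n * (n : ℝ) ^ (-(7 : ℝ) / 2) := by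
  refine ⟨1, one_pos, 4, fun n hn ↦ ?_⟩
  obtain ⟨m, rfl⟩ : ∃ m, n = m + 1 := ⟨n - 1, by omega⟩
  have hsqrt (r : ℝ) : ((m + 1 : ℕ) : ℝ) ^ (r / 2) = √((m : ℝ) + 1) ^ r := by
    rw [rpow_div_two_eq_sqrt _ (Nat.cast_nonneg _), Nat.cast_succ]
  rw [Nat.add_sub_cancel, hsqrt, hsqrt, hsqrt, rpow_ofNat, rpow_ofNat, rpow_neg_ofNat, zpow_neg,
    zpow_ofNat, one_mul, ← div_eq_mul_inv]
  exact abs_catalan_sub_le (by omega)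
end

section
/- Let F = G·H⁻¹ ∈ ℂ[[x₁,x₂]] where G = 2x₁x₂²(2x₂⁵x₁² − 3x₂³x₁ + x₂ + 2x₂²x₁ − 1) and H = x₂⁵x₁² − 2x₂³x₁ + x₂ + 2x₂²x₁ − 2 + 4x₁ (note H(0,0) = −2 ≠ 0). Then there exists a formal power series f ∈ ℂ[[x]] with constant coefficient 0 and coefficient of x equal to 0 satisfying the polynomial equation f⁴ − 2f³ + (1 + 2x)f² − 2xf + 4x³ = 0, such that for every n ∈ ℕ, the coefficient f_n of x^n in f equals the diagonal coefficient F_{(n,n)}. -/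
/-!
Put `t = xy`, `Y = xy²` and `P(Y, t) = Y⁴ - 2Y³ + (1 + 2t)Y² - 2tY + 4t³`. Then `t² y H = P(Y, t)`
and `G = y ∂P/∂Y(Y, t)`, so `F = Y² P_Y / P`. With `C = 1 + tC²` the Catalan series,
`P = (Y² - Y + 2t²C)(Y² - Y + 2t(1 - tC))`, whose roots are `f, 1 - f, g, 1 - g` for
`f = t²f₂`, `g = tg₁`, `f₂ = 2C + t²f₂²`, `g₁ = 2(1 - tC) + tg₁²`. Partial fractions give
`F = ∑ Y² / (Y - root)`: the term at `f` is `f(xy) + y·xy + x·L` with `L` supported on `{a ≥ b}`,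
and the other three are `y·U` with `U` supported on `{a ≤ b}`. Series of the form `x·L` or `y·U`
have no diagonal terms, so the diagonal of `F` is `f`.
-/

theorem Finsupp.lt_or_lt_of_add_apply_lt {σ : Type*} {i j : σ} {p q : σ →₀ ℕ}
    (h : (p + q) i < (p + q) j) : p i < p j ∨ q i < q j := by
  rw [Finsupp.add_apply, Finsupp.add_apply] at h
  omega

namespace MvPowerSeries

variable {σ R : Type*} [CommRing R]

def expLE (j i : σ) : Subring (MvPowerSeries σ R) where
  carrier := {u | ∀ d, d i < d j → coeff d u = 0}
  mul_mem' {u v} hu hv d hd := by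
    classical
    rw [coeff_mul]
    refine Finset.sum_eq_zero fun p hp => ?_
    obtain rfl := Finset.HasAntidiagonal.mem_antidiagonal.mp hp
    rcases Finsupp.lt_or_lt_of_add_apply_lt hd with h | h
    · rw [hu _ h, zero_mul]
    · rw [hv _ h, mul_zero]
  one_mem' d hd := by
    classical
    rw [coeff_one, if_neg]
    rintro rfl
    exact Nat.not_lt_zero _ hd
  add_mem' hu hv d hd := by rw [map_add, hu d hd, hv d hd, add_zero]
  zero_mem' d _ := map_zero _
  neg_mem' hu d hd := by rw [map_neg, hu d hd, neg_zero]

variable {i j l : σ} {u : MvPowerSeries σ R}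

theorem X_mem_expLE (hl : l ≠ j) : X l ∈ expLE (R := R) j i := by
  classical
  intro d hd
  rw [coeff_X, if_neg]
  rintro rfl
  simp [Finsupp.single_apply, hl] at hd

theorem coeff_X_mul_eq_zero_of_mem_expLE (hu : u ∈ expLE j i) (hij : i ≠ j) {d : σ →₀ ℕ}
    (hd : d i ≤ d j) : coeff d (X i * u) = 0 := by
  classical
  rw [X, coeff_monomial_mul]
  split_ifs with hle
  · have h1 : 1 ≤ d i := by simpa using hle i
    have hlt : (d - Finsupp.single i 1 : σ →₀ ℕ) i < (d - Finsupp.single i 1 : σ →₀ ℕ) j := by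
      rw [Finsupp.tsub_apply, Finsupp.tsub_apply, Finsupp.single_eq_same,
        Finsupp.single_eq_of_ne hij.symm]
      omega
    rw [hu _ hlt, mul_zero]
  · rfl

theorem inv_mem_expLE {k : Type*} [Field k] {u : MvPowerSeries σ k} (hu : u ∈ expLE j i) :
    u⁻¹ ∈ expLE j i := by
  classical
  intro d
  induction d using WellFoundedLT.induction with
  | ind d ih =>
    intro hd
    rw [coeff_inv, if_neg (by rintro rfl; exact Nat.not_lt_zero _ hd)]
    refine mul_eq_zero_of_right _ (Finset.sum_eq_zero fun p hp => ?_)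
    obtain rfl := Finset.HasAntidiagonal.mem_antidiagonal.mp hp
    split_ifs with hlt
    · rcases Finsupp.lt_or_lt_of_add_apply_lt hd with h | h
      · rw [hu _ h, zero_mul]
      · rw [ih _ hlt h, mul_zero]
    · rfl

theorem hasSubst_X_mul_X : PowerSeries.HasSubst (X 0 * X 1 : MvPowerSeries (Fin 2) R) :=
  PowerSeries.HasSubst.of_constantCoeff_zero (by simp)

noncomputable def substXY : PowerSeries R →ₐ[R] MvPowerSeries (Fin 2) R :=
  PowerSeries.substAlgHom hasSubst_X_mul_X

theorem substXY_X : substXY (PowerSeries.X : PowerSeries R) = X 0 * X 1 :=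
  PowerSeries.substAlgHom_X _

theorem coeff_substXY (u : PowerSeries R) (d : Fin 2 →₀ ℕ) :
    coeff d (substXY u) = if d 0 = d 1 then PowerSeries.coeff (d 0) u else 0 := by
  classical
  have hpow (n : ℕ) : (X 0 * X 1 : MvPowerSeries (Fin 2) R) ^ n =
      monomial (Finsupp.single 0 n + Finsupp.single 1 n) 1 := by
    rw [mul_pow, X_pow_eq, X_pow_eq, monomial_mul_monomial, one_mul]
  rw [substXY, PowerSeries.coe_substAlgHom, PowerSeries.coeff_subst hasSubst_X_mul_X,
    finsum_eq_single _ (d 0)]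
  · have hdiag : d = Finsupp.single 0 (d 0) + Finsupp.single 1 (d 0) ↔ d 0 = d 1 := by
      refine ⟨fun h => ?_, fun h => ?_⟩
      · simpa using (DFunLike.congr_fun h 1).symm
      · ext k; fin_cases k <;> simp [h]
    rw [hpow, coeff_monomial]
    by_cases h : d 0 = d 1
    · rw [if_pos (hdiag.mpr h), if_pos h, smul_eq_mul, mul_one]
    · rw [if_neg (mt hdiag.mp h), if_neg h, smul_zero]
  · intro n hn
    rw [hpow, coeff_monomial, if_neg, smul_zero]
    rintro rfl
    simp at hn

theorem constantCoeff_substXY (u : PowerSeries R) :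
    constantCoeff (substXY u) = PowerSeries.constantCoeff u := by
  rw [← coeff_zero_eq_constantCoeff_apply, coeff_substXY]
  simp

theorem substXY_mem_expLE (u : PowerSeries R) (i j : Fin 2) : substXY u ∈ expLE j i := by
  intro d hd
  rw [coeff_substXY, if_neg fun h => ?_]
  have hconst (m : Fin 2) : d m = d 0 := by fin_cases m <;> simp [h]
  rw [hconst i, hconst j] at hd
  exact lt_irrefl _ hd

theorem coeff_diag_substXY_add_X_mul_add_X_mul (u : PowerSeries R) {L U : MvPowerSeries (Fin 2) R}
    (hL : L ∈ expLE 1 0) (hU : U ∈ expLE 0 1) (n : ℕ) :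
    coeff (Finsupp.equivFunOnFinite.symm ![n, n]) (substXY u + X 0 * L + X 1 * U) =
      PowerSeries.coeff n u := by
  rw [map_add, map_add, coeff_X_mul_eq_zero_of_mem_expLE hL (by decide) (by simp),
    coeff_X_mul_eq_zero_of_mem_expLE hU (by decide) (by simp), coeff_substXY]
  simp

end MvPowerSeries

open PowerSeries in
theorem PowerSeries.exists_eq_add_mul_sq {R : Type*} [CommRing R] (b c : R⟦X⟧)
    (hc : constantCoeff c = 0) : ∃ s : R⟦X⟧, s = b + c * s ^ 2 := by
  set C : R⟦X⟧ := map (Nat.castRingHom R) catalanSeries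
  have hC : C ^ 2 * X + 1 = C := by
    simpa using congrArg (map (Nat.castRingHom R)) catalanSeries_sq_mul_X_add_one
  have ha : HasSubst (c * b) := HasSubst.of_constantCoeff_zero' (by simp [hc])
  refine ⟨b * substAlgHom ha C, ?_⟩
  have := congrArg (substAlgHom ha) hC
  simp only [map_add, map_mul, map_pow, map_one, substAlgHom_X] at this
  linear_combination (-b) * this

theorem supertrees_quartic {S : Type*} [CommRing S] {t C f : S} (hC : C = 1 + t * C ^ 2)
    (hf : f = 2 * C + t ^ 2 * f ^ 2) :
    (t ^ 2 * f) ^ 4 - 2 * (t ^ 2 * f) ^ 3 + (1 + 2 * t) * (t ^ 2 * f) ^ 2 - 2 * t * (t ^ 2 * f)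
      + 4 * t ^ 3 = 0 := by
  linear_combination
    (-t ^ 2 * ((t ^ 2 * f) ^ 2 - t ^ 2 * f + 2 * t ^ 2 * C + 2 * t - 4 * t ^ 2 * C)) * hf
    - 4 * t ^ 3 * hC

theorem supertrees_partial_fractions {S : Type*} [CommRing S] {x y K A B I₁ I₂ I₃ I₄ J : S}
    (hK : K = 1 + x * y * K ^ 2) (hA : A = 2 * K + (x * y) ^ 2 * A ^ 2)
    (hB : B = 2 - 2 * (x * y) * K + x * y * B ^ 2)
    (h₁ : (1 - x * A) * I₁ = 1) (h₂ : ((x * y) * y - 1 + (x * y) ^ 2 * A) * I₂ = 1)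
    (h₃ : (y - B) * I₃ = 1) (h₄ : ((x * y) * y - 1 + x * y * B) * I₄ = 1)
    (hJ : (y ^ 5 * x ^ 2 - 2 * y ^ 3 * x + y + 2 * y ^ 2 * x - 2 + 4 * x) * J = 1) :
    2 * x * y ^ 2 * (2 * y ^ 5 * x ^ 2 - 3 * y ^ 3 * x + y + 2 * y ^ 2 * x - 1) * J =
      (x * y) ^ 2 * A + x * ((x * y) ^ 2 * A ^ 2 * I₁) +
        y * (x * y + (x * y) * y * I₃ + (x * y) ^ 2 * y * (I₂ + I₄)) := by
  -- With `K, A, B` standing for `C, f₂, g₁` at `t = xy`, in the notation of the header: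
  -- `Y - f = t y E₁`, `Y - (1 - f) = E₂`, `Y - g = t E₃`, `Y - (1 - g) = E₄`.
  set E₁ := 1 - x * A
  set E₂ := (x * y) * y - 1 + (x * y) ^ 2 * A
  set E₃ := y - B
  set E₄ := (x * y) * y - 1 + x * y * B
  have hH : y ^ 5 * x ^ 2 - 2 * y ^ 3 * x + y + 2 * y ^ 2 * x - 2 + 4 * x = E₁ * E₂ * E₃ * E₄ := by
    linear_combination (-4 * x) * hK + (x * y - 2 * x + 2 * x ^ 2 * y * K - x ^ 2 * y ^ 3) * hA
      + (1 - x * A - x * y ^ 2 + x ^ 3 * y ^ 2 * A ^ 2) * hB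
  have hG : 2 * x * y ^ 2 * (2 * y ^ 5 * x ^ 2 - 3 * y ^ 3 * x + y + 2 * y ^ 2 * x - 1) =
      x * y ^ 2 * (E₂ * E₃ * E₄) + x * y ^ 3 * (E₁ * E₂ * E₄) +
        x ^ 2 * y ^ 4 * (E₁ * E₃ * E₄ + E₁ * E₂ * E₃) := by
    linear_combination (x ^ 2 * y ^ 3 - 2 * x ^ 3 * y ^ 5) * hA
      + (x * y ^ 2 - 2 * x ^ 2 * y ^ 4) * hB
  rw [hH] at hJ
  rw [hG]
  linear_combination ((x * y) ^ 2 * A + x * ((x * y) ^ 2 * A ^ 2 * I₁) +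
      y * (x * y + (x * y) * y * I₃ + (x * y) ^ 2 * y * (I₂ + I₄))) * hJ
    - J * (x * (x * y) ^ 2 * A ^ 2 * E₂ * E₃ * E₄ * h₁ + x * y ^ 3 * E₁ * E₂ * E₄ * h₃
      + x ^ 2 * y ^ 4 * (E₁ * E₃ * E₄ * h₂ + E₁ * E₂ * E₃ * h₄))

namespace MvPowerSeries

theorem exists_supertrees_decomposition {k : Type*} [Field k] [NeZero (2 : k)]
    {C f₂ g₁ : PowerSeries k} (hC : C = 1 + PowerSeries.X * C ^ 2)
    (hf₂ : f₂ = 2 * C + PowerSeries.X ^ 2 * f₂ ^ 2)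
    (hg₁ : g₁ = 2 - 2 * PowerSeries.X * C + PowerSeries.X * g₁ ^ 2) :
    ∃ L ∈ expLE (1 : Fin 2) 0, ∃ U ∈ expLE (0 : Fin 2) 1,
      2 * X 0 * X 1 ^ 2 *
          (2 * X 1 ^ 5 * X 0 ^ 2 - 3 * X 1 ^ 3 * X 0 + X 1 + 2 * X 1 ^ 2 * X 0 - 1) *
        (X 1 ^ 5 * X 0 ^ 2 - 2 * X 1 ^ 3 * X 0 + X 1 + 2 * X 1 ^ 2 * X 0 - 2 + 4 * X 0)⁻¹ =
      substXY (PowerSeries.X ^ 2 * f₂) + X 0 * L + X 1 * U := by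
  have hK := congrArg substXY hC
  have hA := congrArg substXY hf₂
  have hB := congrArg substXY hg₁
  simp only [map_add, map_sub, map_mul, map_pow, map_one, map_ofNat, substXY_X] at hK hA hB
  have hg₁0 : PowerSeries.constantCoeff g₁ = 2 := by
    simpa [map_ofNat] using congrArg PowerSeries.constantCoeff hg₁
  rw [supertrees_partial_fractions hK hA hB
      (MvPowerSeries.mul_inv_cancel _ (by simp))
      (MvPowerSeries.mul_inv_cancel _ (by simp))
      (MvPowerSeries.mul_inv_cancel _ (by simp [constantCoeff_substXY, hg₁0, two_ne_zero]))
      (MvPowerSeries.mul_inv_cancel _ (by simp))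
      (MvPowerSeries.mul_inv_cancel _ (by simp [map_ofNat, two_ne_zero])),
    map_mul, map_pow, substXY_X]
  refine ⟨_, ?_, _, ?_, rfl⟩
  all_goals
    rw [← substXY_X]
    repeat' first
      | exact substXY_mem_expLE _ _ _
      | exact X_mem_expLE (by decide)
      | exact one_mem _
      | apply add_mem | apply sub_mem | apply mul_mem | apply pow_mem
      | apply inv_mem_expLE

end MvPowerSeries

open MvPolynomial

/-- The generating function `f` of supertrees, the power series root of
`P(y,x) = y⁴ - 2y³ + (1+2x)y² - 2xy + 4x³` with `f₀ = f₁ = 0`, has Maclaurin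
coefficients equal to the diagonal coefficients of the rational function `F = G/H`. -/
theorem supertrees_diagonal
    (G H : MvPolynomial (Fin 2) ℂ)
    (hG : G = 2 * X 0 * (X 1) ^ 2 *
      (2 * (X 1) ^ 5 * (X 0) ^ 2 - 3 * (X 1) ^ 3 * X 0 + X 1 + 2 * (X 1) ^ 2 * X 0 - 1))
    (hH : H = (X 1) ^ 5 * (X 0) ^ 2 - 2 * (X 1) ^ 3 * X 0 + X 1 + 2 * (X 1) ^ 2 * X 0
      - 2 + 4 * X 0)
    (F : MvPowerSeries (Fin 2) ℂ)
    (hF : F = (G : MvPowerSeries (Fin 2) ℂ) * (H : MvPowerSeries (Fin 2) ℂ)⁻¹) :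
    ∃ f : PowerSeries ℂ,
      PowerSeries.coeff 0 f = 0 ∧
      PowerSeries.coeff 1 f = 0 ∧
      f ^ 4 - 2 * f ^ 3 + (1 + 2 * PowerSeries.X) * f ^ 2 - 2 * PowerSeries.X * f
        + 4 * PowerSeries.X ^ 3 = 0 ∧
      ∀ n : ℕ, PowerSeries.coeff n f =
        MvPowerSeries.coeff (Finsupp.equivFunOnFinite.symm ![n, n]) F := by
  obtain ⟨C, hC⟩ := PowerSeries.exists_eq_add_mul_sq (1 : PowerSeries ℂ) PowerSeries.X (by simp)
  obtain ⟨f₂, hf₂⟩ := PowerSeries.exists_eq_add_mul_sq (2 * C) (PowerSeries.X ^ 2) (by simp)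
  obtain ⟨g₁, hg₁⟩ :=
    PowerSeries.exists_eq_add_mul_sq (2 - 2 * PowerSeries.X * C) PowerSeries.X (by simp)
  refine ⟨PowerSeries.X ^ 2 * f₂, by simp [PowerSeries.coeff_X_pow_mul'],
    by simp [PowerSeries.coeff_X_pow_mul'], supertrees_quartic hC hf₂, fun n => ?_⟩
  obtain ⟨L, hL, U, hU, hLU⟩ := MvPowerSeries.exists_supertrees_decomposition hC hf₂ hg₁
  rw [hG, hH, ← coeToMvPowerSeries.ringHom_apply, ← coeToMvPowerSeries.ringHom_apply] at hF
  simp only [map_sub, map_add, map_mul, map_pow, map_ofNat, map_one,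
    coeToMvPowerSeries.ringHom_apply, coe_X] at hF
  rw [hF, hLU, MvPowerSeries.coeff_diag_substXY_add_X_mul_add_X_mul _ hL hU]
end

section
/- Let H(x₁,x₂) = x₂⁵x₁² − 2x₂³x₁ + x₂ + 2x₂²x₁ − 2 + 4x₁. The variety V = {x ∈ ℂ² : H(x) = 0} is globally smooth: for every x ∈ ℂ² with H(x) = 0, the gradient of H does not vanish at x, i.e., ∂₁H(x) ≠ 0 or ∂₂H(x) ≠ 0. -/
open MvPolynomial

/-! The constant `160` is an explicit combination of `H`, `∂₀H` and `∂₁H` with integer polynomial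
coefficients, so the three polynomials have no common zero over any ring in which `160 ≠ 0`. -/

@[simp]
theorem MvPolynomial.pderiv_ofNat {σ R : Type*} [CommSemiring R] (i : σ) (n : ℕ) [n.AtLeastTwo] :
    pderiv i (no_index (OfNat.ofNat n : MvPolynomial σ R)) = 0 :=
  (pderiv i).map_natCast n

theorem MvPolynomial.eval_ne_zero_or_of_linear_combination_eq_C {σ R : Type*} [CommRing R]
    {f g h u v w : MvPolynomial σ R} {c : R} (hc : c ≠ 0) (hcomb : u * f + v * g + w * h = C c)
    {x : σ → R} (hf : eval x f = 0) : eval x g ≠ 0 ∨ eval x h ≠ 0 := by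
  by_contra! hgh
  apply hc
  simpa [hf, hgh.1, hgh.2] using congrArg (eval x) hcomb.symm

noncomputable def supertreesPoly (R : Type*) [CommRing R] : MvPolynomial (Fin 2) R :=
  X 1 ^ 5 * X 0 ^ 2 - 2 * X 1 ^ 3 * X 0 + X 1 + 2 * X 1 ^ 2 * X 0 - 2 + 4 * X 0

section

variable {R : Type*} [CommRing R]

theorem pderiv_zero_supertreesPoly :
    pderiv 0 (supertreesPoly R) = 2 * X 1 ^ 5 * X 0 - 2 * X 1 ^ 3 + 2 * X 1 ^ 2 + 4 := by
  simp only [supertreesPoly, map_add, map_sub, Derivation.leibniz, Derivation.leibniz_pow,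
    pderiv_X_self, pderiv_X_of_ne one_ne_zero, pderiv_ofNat, smul_eq_mul, nsmul_eq_mul]
  ring

theorem pderiv_one_supertreesPoly :
    pderiv 1 (supertreesPoly R) = 5 * X 1 ^ 4 * X 0 ^ 2 - 6 * X 1 ^ 2 * X 0 + 1 + 4 * X 1 * X 0 := by
  simp only [supertreesPoly, map_add, map_sub, Derivation.leibniz, Derivation.leibniz_pow,
    pderiv_X_self, pderiv_X_of_ne zero_ne_one, pderiv_ofNat, smul_eq_mul, nsmul_eq_mul]
  ring

theorem supertreesPoly_certificate :
    2 * X 1 ^ 5 * (10 + 5 * X 1 - 7 * X 1 ^ 2 + X 1 ^ 3) * supertreesPoly R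
      + -((10 + 5 * X 1 - 7 * X 1 ^ 2 + X 1 ^ 3) * (X 1 ^ 5 * X 0 - X 1 ^ 3 + X 1 ^ 2 + 2)
        + (6 + X 1 - 3 * X 1 ^ 2 + X 1 ^ 3) * (5 * X 1 ^ 5 * X 0 - X 1 ^ 3 - X 1 ^ 2 - 10))
        * pderiv 0 (supertreesPoly R)
      + 2 * X 1 ^ 6 * (6 + X 1 - 3 * X 1 ^ 2 + X 1 ^ 3) * pderiv 1 (supertreesPoly R) = C 160 := by
  rw [pderiv_zero_supertreesPoly, pderiv_one_supertreesPoly, supertreesPoly, map_ofNat]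
  ring

end

/-- The variety of `H(x₁,x₂) = x₂⁵x₁² - 2x₂³x₁ + x₂ + 2x₂²x₁ - 2 + 4x₁` (the denominator
from the supertrees example) is globally smooth: the gradient of `H` does not vanish at
any zero of `H`. -/
theorem supertrees_variety_smooth
    (H : MvPolynomial (Fin 2) ℂ)
    (hH : H = (X 1) ^ 5 * (X 0) ^ 2 - 2 * (X 1) ^ 3 * X 0 + X 1 + 2 * (X 1) ^ 2 * X 0
      - 2 + 4 * X 0) :
    ∀ x : Fin 2 → ℂ, eval x H = 0 →
      eval x (pderiv 0 H) ≠ 0 ∨ eval x (pderiv 1 H) ≠ 0 := by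
  obtain rfl : H = supertreesPoly ℂ := hH
  intro x hx
  exact eval_ne_zero_or_of_linear_combination_eq_C (by norm_num) supertreesPoly_certificate hx
end

section
/- Let H(x₁,x₂) = x₂⁵x₁² − 2x₂³x₁ + x₂ + 2x₂²x₁ − 2 + 4x₁. The set of critical points of H for the direction α = (1,1), i.e., the set of x ∈ ℂ² satisfying H(x) = 0 and x₁·∂₁H(x) = x₂·∂₂H(x), is exactly the three-element set {(3/16 − (1/16)√5, 1 + √5), (3/16 + (1/16)√5, 1 − √5), (1/8, 2)}. -/
/-!
Write `a = x₁`, `b = x₂`. A suitable combination of the two critical equations is linear in `a`,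
namely `(8 + 2b² - b³) a = 3 - b`, and eliminating `a` from `H = 0` with it leaves
`(b - 2)³ (b² - 2b - 4) = 0`. On each of these roots the linear equation reads `16 a = 4 - b`, so
the critical points are the points of the line `16 a + b = 4` with `(b - 2)(b² - 2b - 4) = 0`;
conversely both critical equations lie in the ideal generated by these two.
-/

open MvPolynomial

@[simp]
theorem Derivation.map_ofNat {R A M : Type*} [CommSemiring R] [CommSemiring A] [Algebra R A]
    [AddCommMonoid M] [Module A M] [Module R M] (D : Derivation R A M) (n : ℕ) [n.AtLeastTwo] :
    D (ofNat(n) : A) = 0 := by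
  rw [← Nat.cast_ofNat]
  exact D.map_natCast n

theorem eq_vec2_iff {α : Type*} (x : Fin 2 → α) (u v : α) :
    x = ![u, v] ↔ x 0 = u ∧ x 1 = v := by
  simp [funext_iff, Fin.forall_fin_two]

noncomputable def supertreePoly (R : Type*) [CommRing R] : MvPolynomial (Fin 2) R :=
  X 1 ^ 5 * X 0 ^ 2 - 2 * X 1 ^ 3 * X 0 + X 1 + 2 * X 1 ^ 2 * X 0 - 2 + 4 * X 0

section Evaluation

variable {R : Type*} [CommRing R] (x : Fin 2 → R)

theorem eval_supertreePoly :
    eval x (supertreePoly R) =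
      x 1 ^ 5 * x 0 ^ 2 - 2 * x 1 ^ 3 * x 0 + x 1 + 2 * x 1 ^ 2 * x 0 - 2 + 4 * x 0 := by
  simp [supertreePoly]

theorem eval_pderiv_zero_supertreePoly :
    eval x (pderiv 0 (supertreePoly R)) = 2 * x 1 ^ 5 * x 0 - 2 * x 1 ^ 3 + 2 * x 1 ^ 2 + 4 := by
  simp [supertreePoly]
  ring

theorem eval_pderiv_one_supertreePoly :
    eval x (pderiv 1 (supertreePoly R)) =
      5 * x 1 ^ 4 * x 0 ^ 2 - 6 * x 1 ^ 2 * x 0 + 1 + 4 * x 1 * x 0 := by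
  simp [supertreePoly]
  ring

end Evaluation

section Solving

variable {K : Type*} [Field K] [CharZero K] (a b : K)

theorem supertree_critical_equations_iff :
    (b ^ 5 * a ^ 2 - 2 * b ^ 3 * a + b + 2 * b ^ 2 * a - 2 + 4 * a = 0 ∧
      a * (2 * b ^ 5 * a - 2 * b ^ 3 + 2 * b ^ 2 + 4) =
        b * (5 * b ^ 4 * a ^ 2 - 6 * b ^ 2 * a + 1 + 4 * b * a)) ↔
    16 * a = 4 - b ∧ (b - 2) * (b ^ 2 - 2 * b - 4) = 0 := by
  constructor
  · rintro ⟨hH, hcrit⟩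
    have hlin : (8 + 2 * b ^ 2 - b ^ 3) * a = 3 - b := by
      linear_combination (3 / 2 : K) * hH + (1 / 2 : K) * hcrit
    have helim : (b - 2) ^ 3 * (b ^ 2 - 2 * b - 4) = 0 := by
      linear_combination (-(8 + 2 * b ^ 2 - b ^ 3) ^ 2) * hH +
        (b ^ 5 * ((8 + 2 * b ^ 2 - b ^ 3) * a + 3 - b) +
          (4 + 2 * b ^ 2 - 2 * b ^ 3) * (8 + 2 * b ^ 2 - b ^ 3)) * hlin
    have hroots : b - 2 = 0 ∨ b ^ 2 - 2 * b - 4 = 0 :=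
      (mul_eq_zero.mp helim).imp_left (pow_eq_zero_iff three_ne_zero).mp
    have hline : 16 * a = 4 - b := by
      rcases hroots with hb | hq
      · obtain rfl : b = 2 := sub_eq_zero.mp hb
        linear_combination 2 * hlin
      · -- on `b² = 2b + 4` the coefficient `8 + 2b² - b³` reduces to `8 - 4b`
        have hne : (8 - 4 * b : K) ≠ 0 := by
          intro h
          obtain rfl : b = 2 := by linear_combination -h / 4
          norm_num at hq
        refine sub_eq_zero.mp ((mul_eq_zero.mp ?_).resolve_left hne)
        linear_combination 16 * hlin + (16 * a * b - 4) * hq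
    exact ⟨hline, mul_eq_zero.mpr hroots⟩
  · rintro ⟨hline, hcubic⟩
    constructor
    · linear_combination (b ^ 5 * (a + (4 - b) / 16) - 2 * b ^ 3 + 2 * b ^ 2 + 4) / 16 * hline +
        (-1 / 8 + 3 / 32 * b - 1 / 64 * b ^ 3 + 1 / 256 * b ^ 4) * hcubic
    · linear_combination (-3 * b ^ 5 * (a + (4 - b) / 16) + 4 * b ^ 3 - 2 * b ^ 2 + 4) / 16 * hline +
        (1 / 8 - 5 / 32 * b + 3 / 64 * b ^ 3 - 3 / 256 * b ^ 4) * hcubic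

theorem line_and_cubic_iff_of_sq_eq_five (s : K) (hs : s ^ 2 = 5) :
    (16 * a = 4 - b ∧ (b - 2) * (b ^ 2 - 2 * b - 4) = 0) ↔
      (a = 3 / 16 - 1 / 16 * s ∧ b = 1 + s) ∨ (a = 3 / 16 + 1 / 16 * s ∧ b = 1 - s) ∨
        (a = 1 / 8 ∧ b = 2) := by
  have hfactor : (b - 2) * (b ^ 2 - 2 * b - 4) = (b - 2) * ((b - (1 + s)) * (b - (1 - s))) := by
    linear_combination (b - 2) * hs
  rw [hfactor, mul_eq_zero, mul_eq_zero, sub_eq_zero, sub_eq_zero, sub_eq_zero]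
  constructor
  · rintro ⟨hline, rfl | rfl | rfl⟩
    · exact .inr (.inr ⟨by linear_combination hline / 16, rfl⟩)
    · exact .inl ⟨by linear_combination hline / 16, rfl⟩
    · exact .inr (.inl ⟨by linear_combination hline / 16, rfl⟩)
  · rintro (⟨rfl, rfl⟩ | ⟨rfl, rfl⟩ | ⟨rfl, rfl⟩)
    · exact ⟨by ring, .inr (.inl rfl)⟩
    · exact ⟨by ring, .inr (.inr rfl)⟩
    · exact ⟨by norm_num, .inl rfl⟩

end Solving

/-- The critical points of `H(x₁,x₂) = x₂⁵x₁² - 2x₂³x₁ + x₂ + 2x₂²x₁ - 2 + 4x₁` for the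
direction `α = (1,1)` are exactly `(3/16 - √5/16, 1 + √5)`, `(3/16 + √5/16, 1 - √5)`
and `(1/8, 2)`. -/
theorem supertrees_critical_points
    (H : MvPolynomial (Fin 2) ℂ)
    (hH : H = (X 1) ^ 5 * (X 0) ^ 2 - 2 * (X 1) ^ 3 * X 0 + X 1 + 2 * (X 1) ^ 2 * X 0
      - 2 + 4 * X 0) :
    ∀ x : Fin 2 → ℂ,
      (eval x H = 0 ∧ x 0 * eval x (pderiv 0 H) = x 1 * eval x (pderiv 1 H)) ↔
        (x = ![3/16 - (1/16) * (Real.sqrt 5 : ℂ), 1 + (Real.sqrt 5 : ℂ)] ∨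
         x = ![3/16 + (1/16) * (Real.sqrt 5 : ℂ), 1 - (Real.sqrt 5 : ℂ)] ∨
         x = ![1/8, 2]) := by
  intro x
  have hsqrt : ((Real.sqrt 5 : ℝ) : ℂ) ^ 2 = 5 := by
    rw [← Complex.ofReal_pow, Real.sq_sqrt (by norm_num)]
    norm_num
  rw [show H = supertreePoly ℂ from hH, eval_supertreePoly, eval_pderiv_zero_supertreePoly,
    eval_pderiv_one_supertreePoly, supertree_critical_equations_iff, line_and_cubic_iff_of_sq_eq_five _ _ _ hsqrt,
    eq_vec2_iff, eq_vec2_iff, eq_vec2_iff]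
end

section
/- Let H(x₁,x₂) = x₂⁵x₁² − 2x₂³x₁ + x₂ + 2x₂²x₁ − 2 + 4x₁. For each of the three points q ∈ {(3/16 − (1/16)√5, 1 + √5), (3/16 + (1/16)√5, 1 − √5), (1/8, 2)}, the point q is not minimal on the variety V = {x ∈ ℂ² : H(x) = 0}: there exists q' ∈ ℂ² with H(q') = 0, |q'₁| = |q₁|, and |q'₂| < |q₂|. -/
/-!
All three points are real. Keep a real first coordinate `a` of the same modulus (`q₁` itself,
or `-1/8` for `(1/8, 2)`) and look for a real second coordinate: `t ↦ H(a, t)` is a real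
quintic with `H(a, 0) = 4a - 2 < 0`, and it is positive at some `c ≤ |q₂|` (`c = 3, 1, 2`
respectively), so the intermediate value theorem gives a root `t ∈ (0, c)`.
-/

open MvPolynomial Set

noncomputable def supertreeH : MvPolynomial (Fin 2) ℂ :=
  (X 1) ^ 5 * (X 0) ^ 2 - 2 * (X 1) ^ 3 * X 0 + X 1 + 2 * (X 1) ^ 2 * X 0 - 2 + 4 * X 0

def supertreeHReal (a t : ℝ) : ℝ :=
  t ^ 5 * a ^ 2 - 2 * t ^ 3 * a + t + 2 * t ^ 2 * a - 2 + 4 * a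

lemma eval_supertreeH_ofReal (a t : ℝ) :
    eval ![(a : ℂ), (t : ℂ)] supertreeH = supertreeHReal a t := by
  simp only [supertreeH, supertreeHReal, map_sub, map_add, map_mul, map_pow, eval_X, map_ofNat,
    Matrix.cons_val_zero, Matrix.cons_val_one]
  push_cast
  ring

lemma exists_supertreeHReal_eq_zero {a c : ℝ} (hc : 0 ≤ c) (ha : a < 1 / 2)
    (hpos : 0 < supertreeHReal a c) : ∃ t ∈ Ioo 0 c, supertreeHReal a t = 0 := by
  have hcont : ContinuousOn (supertreeHReal a) (Icc 0 c) := by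
    unfold supertreeHReal; fun_prop
  have hneg : supertreeHReal a 0 < 0 := by
    simp only [supertreeHReal]; linarith
  exact intermediate_value_Ioo hc hcont ⟨hneg, hpos⟩

lemma exists_supertreeH_eq_zero_norm_lt {a b c s : ℝ} (z : Fin 2 → ℂ) (hz0 : z 0 = b)
    (hz1 : z 1 = s) (hc : 0 ≤ c) (ha : a < 1 / 2) (hpos : 0 < supertreeHReal a c)
    (hab : |a| = |b|) (hcs : c ≤ |s|) :
    ∃ q' : Fin 2 → ℂ, eval q' supertreeH = 0 ∧ ‖q' 0‖ = ‖z 0‖ ∧ ‖q' 1‖ < ‖z 1‖ := by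
  obtain ⟨t, ⟨ht0, htc⟩, hroot⟩ := exists_supertreeHReal_eq_zero hc ha hpos
  refine ⟨![(a : ℂ), (t : ℂ)], ?_, ?_, ?_⟩
  · rw [eval_supertreeH_ofReal, hroot, Complex.ofReal_zero]
  · simpa [hz0, Complex.norm_real] using hab
  · simp only [Matrix.cons_val_one, Matrix.cons_val_zero, hz1, Complex.norm_real,
      Real.norm_eq_abs, abs_of_pos ht0]
    linarith

/-- None of the three critical points of `H(x₁,x₂) = x₂⁵x₁² - 2x₂³x₁ + x₂ + 2x₂²x₁ - 2 + 4x₁`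
for the direction `(1,1)` is minimal: each admits a witness `q'` on the variety with
`|q'₁| = |q₁|` and `|q'₂| < |q₂|`. -/
theorem supertrees_critical_points_not_minimal
    (H : MvPolynomial (Fin 2) ℂ)
    (hH : H = (X 1) ^ 5 * (X 0) ^ 2 - 2 * (X 1) ^ 3 * X 0 + X 1 + 2 * (X 1) ^ 2 * X 0
      - 2 + 4 * X 0) :
    ∀ q : Fin 2 → ℂ,
      (q = ![3/16 - (1/16) * (Real.sqrt 5 : ℂ), 1 + (Real.sqrt 5 : ℂ)] ∨
       q = ![3/16 + (1/16) * (Real.sqrt 5 : ℂ), 1 - (Real.sqrt 5 : ℂ)] ∨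
       q = ![1/8, 2]) →
      ∃ q' : Fin 2 → ℂ, eval q' H = 0 ∧
        ‖q' 0‖ = ‖q 0‖ ∧
        ‖q' 1‖ < ‖q 1‖ := by
  subst hH
  have s5 : √5 ^ 2 = 5 := Real.sq_sqrt (by norm_num)
  -- `H((3 - √5)/16, 3) = (2122 - 946√5)/256` is positive only because `√5 < 2.243`.
  have s5lt : √5 < 9 / 4 := by nlinarith [Real.sqrt_nonneg 5]
  have s5gt : 2 < √5 := by nlinarith [Real.sqrt_nonneg 5]
  intro q hq
  rcases hq with rfl | rfl | rfl
  · exact exists_supertreeH_eq_zero_norm_lt (a := (3 - √5) / 16) (c := 3)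
      (s := 1 + √5) _
      (by norm_num; ring) (by norm_num) (by norm_num) (by linarith)
      (by simp only [supertreeHReal]; nlinarith) rfl
      (by rw [abs_of_pos (by linarith)]; linarith)
  · exact exists_supertreeH_eq_zero_norm_lt (a := (3 + √5) / 16) (c := 1)
      (s := 1 - √5) _
      (by norm_num; ring) (by norm_num) (by norm_num) (by linarith)
      (by simp only [supertreeHReal]; nlinarith) rfl
      (by rw [abs_of_neg (by linarith)]; linarith)
  · exact exists_supertreeH_eq_zero_norm_lt (a := -1 / 8) (b := 1 / 8) (c := 2) (s := 2) _
      (by norm_num) (by norm_num) (by norm_num) (by norm_num) (by norm_num [supertreeHReal])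
      (by norm_num) (by norm_num)
end

section
/- Let F = G·H⁻¹ ∈ ℂ[[x₁,x₂]] where G = x₂x₁(−3x₂ + 3x₂²x₁ − 2 + 2x₂x₁ + x₁ − 2x₂² + 2x₂³x₁) and H = −x₂ + x₂²x₁ − 2 + 2x₂x₁ + x₁ (note H(0,0) = −2 ≠ 0). Then F_{(0,0)} = 0 and for every n ≥ 1, the diagonal coefficient F_{(n,n)} equals binom(2n−2, n−1)/4^{n−1}. Equivalently, the Maclaurin coefficients of the algebraic function f(x₁) = x₁/√(1 − x₁) satisfy f_n = F_{(n,n)} for all n ∈ ℕ. -/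
/-!
Write `F = ∑ₐ gₐ(x₂) x₁ᵃ`. Since `H = x₁(1 + x₂)² - (2 + x₂)`, comparing coefficients of `x₁ᵃ⁺¹`
in `F H = G` gives `(2 + x₂) gₐ₊₁ = (1 + x₂)² gₐ - [x₁ᵃ⁺¹] G`, so that
`g₁ = x₂(2x₂² + 3x₂ + 2)/(2 + x₂)` and `gₘ₊₂ = 2x₂²(1 + x₂)²ᵐ⁺¹/(2 + x₂)ᵐ⁺²`.
The diagonal coefficients `dₙ = [x₂ⁿ] gₙ` satisfy `(2m + 4) dₘ₊₃ = (2m + 3) dₘ₊₂` by creative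
telescoping: with `W = x₂²(x₂ + 2m + 4)(1 + x₂)²ᵐ⁺²/(2 + x₂)ᵐ⁺²`,
`(m + 1)((2m + 4) gₘ₊₃ - (2m + 3) x₂ gₘ₊₂) = (m + 3) W - x₂ W'`,
and the coefficient of `x₂ᵐ⁺³` on the right vanishes. Together with `d₁ = 1`, `d₂ = 1/2` this is
the recurrence of `binom(2n, n)/4ⁿ`.
-/

theorem Derivation.pow_succ_mul_apply_of_pow_mul_eq {R A : Type*} [CommSemiring R] [CommRing A]
    [Algebra R A] (D : Derivation R A A) {r w n : A} (hr : D r = 1) (k : ℕ) (h : r ^ k * w = n) :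
    r ^ (k + 1) * D w = r * D n - k * n := by
  subst h
  rw [D.leibniz, D.leibniz_pow, hr, smul_eq_mul, smul_eq_mul]
  cases k with
  | zero => simp
  | succ k => simp only [nsmul_eq_mul, Nat.add_sub_cancel]; push_cast; ring

theorem eq_centralBinom_div_four_pow {K : Type*} [Field K] [CharZero K] {a : ℕ → K}
    (h0 : a 0 = 1) (hrec : ∀ n : ℕ, (2 * n + 2) * a (n + 1) = (2 * n + 1) * a n) (n : ℕ) :
    a n = Nat.centralBinom n / 4 ^ n := by
  induction n with
  | zero => simp [h0]
  | succ n ih =>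
    have hn : (2 * n + 2 : K) ≠ 0 := by exact_mod_cast (show 2 * n + 2 ≠ 0 by omega)
    have hc : ((n + 1) * Nat.centralBinom (n + 1) : K) = 2 * (2 * n + 1) * Nat.centralBinom n := by
      exact_mod_cast Nat.succ_mul_centralBinom_succ n
    refine mul_left_cancel₀ hn ?_
    rw [hrec, ih, pow_succ]
    field_simp
    linear_combination (-2 : K) * hc

namespace PowerSeries

section CommRing

variable {R : Type*} [CommRing R]

theorem coeff_zero_mul_X_mul_C_sub_C (f : R⟦X⟧) (s r : R) :
    coeff 0 (f * (X * C s - C r)) = -(coeff 0 f * r) := by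
  simp [mul_sub, ← mul_assoc]

theorem coeff_succ_mul_X_mul_C_sub_C (f : R⟦X⟧) (s r : R) (n : ℕ) :
    coeff (n + 1) (f * (X * C s - C r)) = coeff n f * s - coeff (n + 1) f * r := by
  rw [mul_sub, ← mul_assoc, map_sub, coeff_mul_C, coeff_mul_C, coeff_succ_mul_X]

end CommRing

theorem coeff_eq_div_of_mul_eq_X_pow_mul {K : Type*} [Field K] {u g h : K⟦X⟧}
    (hu : constantCoeff u ≠ 0) {j : ℕ} (H : u * g = X ^ j * h) :
    coeff j g = constantCoeff h / constantCoeff u := by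
  have hg : g = X ^ j * (u⁻¹ * h) := by
    rw [mul_left_comm, ← H, ← mul_assoc, PowerSeries.inv_mul_cancel _ hu, one_mul]
  rw [hg, coeff_X_pow_mul', if_pos le_rfl, Nat.sub_self, coeff_zero_eq_constantCoeff, map_mul,
    constantCoeff_inv, div_eq_inv_mul]

end PowerSeries

namespace MvPowerSeries

open PowerSeries

variable (R : Type*) [CommSemiring R]

noncomputable def finTwoEquiv : MvPowerSeries (Fin 2) R ≃ₐ[R] R⟦X⟧⟦X⟧ :=
  (renameEquiv R ((_root_.finSuccEquiv 1).trans
    (Equiv.optionCongr (Equiv.ofUnique (Fin 1) Unit)))).trans (optionEquivLeft Unit R)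

variable {R}

theorem coeff_coeff_finTwoEquiv (p : MvPowerSeries (Fin 2) R) (a b : ℕ) :
    PowerSeries.coeff b (PowerSeries.coeff a (finTwoEquiv R p)) =
      coeff (Finsupp.equivFunOnFinite.symm ![a, b]) p := by
  change coeff (Finsupp.single () b) (PowerSeries.coeff a (optionEquivLeft Unit R (rename _ p))) = _
  rw [coeff_coeff_optionEquivLeft]
  convert coeff_embDomain_rename
    ((_root_.finSuccEquiv 1).trans (Equiv.optionCongr (Equiv.ofUnique (Fin 1) Unit))).toEmbedding p _
    using 3
  · ext i
    rcases i with _ | ⟨⟩ <;> simp [Finsupp.embDomain_apply]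
  · rfl

@[simp]
theorem finTwoEquiv_X_zero : finTwoEquiv R (X 0) = PowerSeries.X := by
  simp [finTwoEquiv]

@[simp]
theorem finTwoEquiv_X_one : finTwoEquiv R (X 1) = PowerSeries.C PowerSeries.X := by
  simp only [finTwoEquiv, AlgEquiv.trans_apply, renameEquiv_apply]
  convert optionEquivLeft_X_some (R := R) () using 2
  · exact rename_X _ _
  · rfl

end MvPowerSeries

namespace UnivariateDiagonal

open PowerSeries

section CommRing

variable (R : Type*) [CommRing R]

-- `H` and `G` read in `R⟦x₂⟧⟦x₁⟧`, where the outer variable is `x₁`.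
noncomputable def denominator : R⟦X⟧⟦X⟧ := X * C ((1 + X) ^ 2) - C (2 + X)

noncomputable def numerator : R⟦X⟧⟦X⟧ :=
  X ^ 2 * C (X * (1 + X) * (2 * X ^ 2 + X + 1)) - X * C (X * (2 * X ^ 2 + 3 * X + 2))

variable {R}

theorem coeff_zero_numerator : coeff 0 (numerator R) = 0 := by
  simp [numerator]

theorem coeff_one_numerator : coeff 1 (numerator R) = -(X * (2 * X ^ 2 + 3 * X + 2)) := by
  simp [numerator, coeff_X, -map_mul, -map_add, -map_pow]

theorem coeff_two_numerator : coeff 2 (numerator R) = X * (1 + X) * (2 * X ^ 2 + X + 1) := by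
  simp [numerator, coeff_X, -map_mul, -map_add, -map_pow]

theorem coeff_add_three_numerator (m : ℕ) : coeff (m + 3) (numerator R) = 0 := by
  simp [numerator, coeff_X, -map_mul, -map_add, -map_pow]

theorem two_add_X_mul_coeff_succ {Φ : R⟦X⟧⟦X⟧} (hΦ : Φ * denominator R = numerator R) (n : ℕ) :
    (2 + X) * coeff (n + 1) Φ = (1 + X) ^ 2 * coeff n Φ - coeff (n + 1) (numerator R) := by
  rw [← hΦ, denominator, coeff_succ_mul_X_mul_C_sub_C]
  ring

end CommRing

variable {K : Type*} [Field K] [CharZero K]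

theorem constantCoeff_two_add_X_pow_ne_zero (k : ℕ) :
    constantCoeff ((2 + X : K⟦X⟧) ^ k) ≠ 0 := by
  simp [map_ofNat]

theorem two_add_X_pow_ne_zero (k : ℕ) : (2 + X : K⟦X⟧) ^ k ≠ 0 :=
  fun h ↦ constantCoeff_two_add_X_pow_ne_zero k (by rw [h, map_zero])

section Diagonal

variable {g : ℕ → K⟦X⟧}

theorem creative_telescoping
    (hg : ∀ m, (2 + X) ^ (m + 2) * g (m + 2) = 2 * X ^ 2 * (1 + X) ^ (2 * m + 1)) (m : ℕ)
    {W : K⟦X⟧}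
    (hW : (2 + X) ^ (m + 2) * W = X ^ 2 * (X + ((2 * m + 4 : ℕ) : K⟦X⟧)) * (1 + X) ^ (2 * m + 2)) :
    (m + 1) • ((2 * m + 4) • g (m + 3) - (2 * m + 3) • (X * g (m + 2))) =
      (m + 3) • W - X * d⁄dX K W := by
  have h2 : d⁄dX K (2 : K⟦X⟧) = 0 := by simpa using (d⁄dX K).map_natCast 2
  have hW' := (d⁄dX K).pow_succ_mul_apply_of_pow_mul_eq (by simp [h2]) (m + 2) hW
  simp only [Derivation.leibniz, Derivation.leibniz_pow, smul_eq_mul, nsmul_eq_mul, derivative_X,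
    map_add, Derivation.map_natCast, Derivation.map_one_eq_zero,
    show 2 * m + 2 - 1 = 2 * m + 1 by omega] at hW'
  have h₀ := hg m
  have h₁ := hg (m + 1)
  refine mul_left_cancel₀ (two_add_X_pow_ne_zero (m + 3)) ?_
  simp only [nsmul_eq_mul]
  push_cast at hW hW' h₁ ⊢
  linear_combination ((m : K⟦X⟧) + 1) * (2 * m + 4) * h₁
    - ((m : K⟦X⟧) + 1) * (2 * m + 3) * X * (2 + X) * h₀ - ((m : K⟦X⟧) + 3) * (2 + X) * hW + X * hW'

theorem coeff_self_recurrence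
    (hg : ∀ m, (2 + X) ^ (m + 2) * g (m + 2) = 2 * X ^ 2 * (1 + X) ^ (2 * m + 1)) (m : ℕ) :
    (2 * m + 4) * coeff (m + 3) (g (m + 3)) = (2 * m + 3) * coeff (m + 2) (g (m + 2)) := by
  obtain ⟨W, hW⟩ : ∃ W : K⟦X⟧,
      (2 + X) ^ (m + 2) * W = X ^ 2 * (X + ((2 * m + 4 : ℕ) : K⟦X⟧)) * (1 + X) ^ (2 * m + 2) :=
    ⟨_, by rw [← mul_assoc, PowerSeries.mul_inv_cancel _ (constantCoeff_two_add_X_pow_ne_zero _),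
      one_mul]⟩
  have h := congrArg (coeff (m + 3)) (creative_telescoping hg m hW)
  simp only [map_nsmul, map_sub, coeff_succ_X_mul, coeff_derivative] at h
  simp only [nsmul_eq_mul] at h
  push_cast at h
  refine (mul_right_inj' (Nat.cast_add_one_ne_zero (R := K) m)).1 ?_
  linear_combination h

theorem coeff_succ_self (h₁ : (2 + X) * g 1 = X * (2 * X ^ 2 + 3 * X + 2))
    (hg : ∀ m, (2 + X) ^ (m + 2) * g (m + 2) = 2 * X ^ 2 * (1 + X) ^ (2 * m + 1)) (n : ℕ) :
    coeff (n + 1) (g (n + 1)) = Nat.centralBinom n / 4 ^ n := by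
  have hd₁ : coeff 1 (g 1) = 1 := by
    rw [coeff_eq_div_of_mul_eq_X_pow_mul (constantCoeff_two_add_X_pow_ne_zero 1) (j := 1)
      (h := 2 * X ^ 2 + 3 * X + 2) (by simpa using h₁)]
    simp [map_ofNat]
  have hd₂ : coeff 2 (g 2) = 1 / 2 := by
    rw [coeff_eq_div_of_mul_eq_X_pow_mul (constantCoeff_two_add_X_pow_ne_zero 2) (j := 2)
      (h := 2 * (1 + X)) (by rw [hg 0]; ring)]
    norm_num [map_ofNat]
  refine eq_centralBinom_div_four_pow (a := fun n ↦ coeff (n + 1) (g (n + 1))) hd₁ ?_ n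
  rintro (_ | m)
  · simp [hd₁, hd₂]
  · push_cast
    linear_combination coeff_self_recurrence hg m

end Diagonal

variable {Φ : K⟦X⟧⟦X⟧}

theorem coeff_zero_eq_zero (hΦ : Φ * denominator K = numerator K) : coeff 0 Φ = 0 := by
  have h := congrArg (coeff 0) hΦ
  rw [denominator, coeff_zero_mul_X_mul_C_sub_C, coeff_zero_numerator, neg_eq_zero] at h
  exact (mul_eq_zero.1 h).resolve_right (by simpa using two_add_X_pow_ne_zero (K := K) 1)

theorem two_add_X_mul_coeff_one (hΦ : Φ * denominator K = numerator K) :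
    (2 + X) * coeff 1 Φ = X * (2 * X ^ 2 + 3 * X + 2) := by
  rw [two_add_X_mul_coeff_succ hΦ, coeff_zero_eq_zero hΦ, coeff_one_numerator]
  ring

theorem two_add_X_pow_mul_coeff_add_two (hΦ : Φ * denominator K = numerator K) (m : ℕ) :
    (2 + X) ^ (m + 2) * coeff (m + 2) Φ = 2 * X ^ 2 * (1 + X) ^ (2 * m + 1) := by
  induction m with
  | zero =>
    have h := two_add_X_mul_coeff_succ hΦ 1
    rw [coeff_two_numerator] at h
    linear_combination (2 + X) * h + (1 + X) ^ 2 * two_add_X_mul_coeff_one hΦ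
  | succ m ih =>
    have h := two_add_X_mul_coeff_succ hΦ (m + 2)
    rw [coeff_add_three_numerator] at h
    linear_combination (2 + X) ^ (m + 2) * h + (1 + X) ^ 2 * ih

theorem coeff_succ_coeff_succ (hΦ : Φ * denominator K = numerator K) (n : ℕ) :
    coeff (n + 1) (coeff (n + 1) Φ) = Nat.centralBinom n / 4 ^ n :=
  coeff_succ_self (g := fun a ↦ coeff a Φ) (two_add_X_mul_coeff_one hΦ)
    (two_add_X_pow_mul_coeff_add_two hΦ) n

end UnivariateDiagonal

open MvPolynomial

theorem MvPowerSeries.finTwoEquiv_coe_eq_comp {R : Type*} [CommSemiring R] (P : MvPolynomial (Fin 2) R) :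
    finTwoEquiv R P = ((finTwoEquiv R : _ →+* _).comp coeToMvPowerSeries.ringHom) P :=
  rfl

theorem UnivariateDiagonal.finTwoEquiv_coe_denominator {R : Type*} [CommRing R] :
    MvPowerSeries.finTwoEquiv R
        ↑(-X 1 + (X 1) ^ 2 * X 0 - 2 + 2 * X 1 * X 0 + X 0 : MvPolynomial (Fin 2) R) =
      denominator R := by
  rw [MvPowerSeries.finTwoEquiv_coe_eq_comp]
  simp only [denominator, map_add, map_sub, map_mul, map_neg, map_pow, map_one, map_ofNat,
    RingHom.comp_apply, coeToMvPowerSeries.ringHom_apply, coe_X, RingHom.coe_coe,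
    MvPowerSeries.finTwoEquiv_X_zero, MvPowerSeries.finTwoEquiv_X_one]
  ring

theorem UnivariateDiagonal.finTwoEquiv_coe_numerator {R : Type*} [CommRing R] :
    MvPowerSeries.finTwoEquiv R ↑(X 1 * X 0 * (-3 * X 1 + 3 * (X 1) ^ 2 * X 0 - 2 + 2 * X 1 * X 0
      + X 0 - 2 * (X 1) ^ 2 + 2 * (X 1) ^ 3 * X 0) : MvPolynomial (Fin 2) R) = numerator R := by
  rw [MvPowerSeries.finTwoEquiv_coe_eq_comp]
  simp only [numerator, map_add, map_sub, map_mul, map_neg, map_pow, map_one, map_ofNat,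
    RingHom.comp_apply, coeToMvPowerSeries.ringHom_apply, coe_X, RingHom.coe_coe,
    MvPowerSeries.finTwoEquiv_X_zero, MvPowerSeries.finTwoEquiv_X_one]
  ring

/-- The Maclaurin coefficients of `f(x₁) = x₁/√(1-x₁)`, namely `f₀ = 0` and
`f_n = binom(2n-2, n-1)/4^{n-1}` for `n ≥ 1`, are the diagonal coefficients of the
rational function `F = G/H`. -/
theorem basic_univariate_diagonal
    (G H : MvPolynomial (Fin 2) ℂ)
    (hG : G = X 1 * X 0 * (-3 * X 1 + 3 * (X 1) ^ 2 * X 0 - 2 + 2 * X 1 * X 0 + X 0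
      - 2 * (X 1) ^ 2 + 2 * (X 1) ^ 3 * X 0))
    (hH : H = -X 1 + (X 1) ^ 2 * X 0 - 2 + 2 * X 1 * X 0 + X 0)
    (F : MvPowerSeries (Fin 2) ℂ)
    (hF : F = (G : MvPowerSeries (Fin 2) ℂ) * (H : MvPowerSeries (Fin 2) ℂ)⁻¹) :
    MvPowerSeries.coeff (Finsupp.equivFunOnFinite.symm ![0, 0]) F = 0 ∧
    ∀ n : ℕ, 1 ≤ n →
      MvPowerSeries.coeff (Finsupp.equivFunOnFinite.symm ![n, n]) F =
        (Nat.choose (2 * n - 2) (n - 1) : ℂ) / 4 ^ (n - 1) := by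
  have hH₀ : MvPowerSeries.constantCoeff (H : MvPowerSeries (Fin 2) ℂ) ≠ 0 := by
    rw [← MvPowerSeries.coeff_zero_eq_constantCoeff_apply, coeff_coe, ← constantCoeff_eq, hH]
    simp [map_ofNat]
  have hFH : F * H = G := by rw [hF, mul_assoc, MvPowerSeries.inv_mul_cancel _ hH₀, mul_one]
  have hΦ : MvPowerSeries.finTwoEquiv ℂ F * UnivariateDiagonal.denominator ℂ =
      UnivariateDiagonal.numerator ℂ := by
    rw [← UnivariateDiagonal.finTwoEquiv_coe_denominator, ← hH,
      ← UnivariateDiagonal.finTwoEquiv_coe_numerator, ← hG, ← map_mul, hFH]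
  refine ⟨?_, fun n hn ↦ ?_⟩
  · rw [← MvPowerSeries.coeff_coeff_finTwoEquiv, UnivariateDiagonal.coeff_zero_eq_zero hΦ, map_zero]
  · obtain ⟨k, rfl⟩ := Nat.exists_eq_add_of_le' hn
    rw [← MvPowerSeries.coeff_coeff_finTwoEquiv, UnivariateDiagonal.coeff_succ_coeff_succ hΦ,
      Nat.add_sub_cancel, show 2 * (k + 1) - 2 = 2 * k by omega,
      ← Nat.centralBinom_eq_two_mul_choose]
end

section
/- Let H(x₁,x₂) = −x₂ + x₂²x₁ − 2 + 2x₂x₁ + x₁ and let λ ∈ ℝ with 0 < λ < 1 (so that λ² − 10λ + 9 > 0 and its positive real square root s = √(λ² − 10λ + 9) is defined). The set of critical points of H for the direction α = (1, λ), i.e., the set of x ∈ ℂ² satisfying H(x) = 0 and λ·x₁·∂₁H(x) = x₂·∂₂H(x), is exactly the two-element set { (λ²/8 + (λ/8 − 3/8)·s − λ + 7/8, (3 − 3λ + s)/(2(λ−1))), (λ²/8 − (λ/8 − 3/8)·s − λ + 7/8, (3 − 3λ − s)/(2(λ−1))) }. -/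
/-!
Writing `H = x₁(x₂ + 1)² - (x₂ + 2)`, the equation `H = 0` forces `x₂ ≠ -1` and determines `x₁`
from `x₂`; substituting it into the critical point equation leaves the quadratic
`(λ - 1)x₂² + 3(λ - 1)x₂ + 2λ = 0`, whose discriminant is `λ² - 10λ + 9 = s²`. The two roots
`x₂ = (3 - 3λ ± s)/(2(λ - 1))` then give `x₁ = (x₂ + 2)/(x₂ + 1)²`, which simplifies as claimed once
`s²` is eliminated; the `-s` root is the `+s` root for the other square root of the discriminant.
-/

open MvPolynomial

section EvalH

variable {R : Type*} [CommRing R]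

lemma H_eq_factored :
    (-X 1 + X 1 ^ 2 * X 0 - 2 + 2 * X 1 * X 0 + X 0 : MvPolynomial (Fin 2) R) =
      X 0 * (X 1 + 1) ^ 2 - (X 1 + 2) := by
  ring

variable (x : Fin 2 → R)

lemma eval_H_factored :
    eval x (X 0 * (X 1 + 1) ^ 2 - (X 1 + 2) : MvPolynomial (Fin 2) R) =
      x 0 * (x 1 + 1) ^ 2 - (x 1 + 2) := by
  simp

lemma eval_pderiv_zero_H_factored :
    eval x (pderiv 0 (X 0 * (X 1 + 1) ^ 2 - (X 1 + 2) : MvPolynomial (Fin 2) R)) =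
      (x 1 + 1) ^ 2 := by
  simp [← map_ofNat C]

lemma eval_pderiv_one_H_factored :
    eval x (pderiv 1 (X 0 * (X 1 + 1) ^ 2 - (X 1 + 2) : MvPolynomial (Fin 2) R)) =
      x 0 * (2 * x 1 + 2) - 1 := by
  simp [← map_ofNat C]

end EvalH

lemma eq_vec_two_iff {α : Type*} (x : Fin 2 → α) (a b : α) :
    x = ![a, b] ↔ x 0 = a ∧ x 1 = b := by
  simp [funext_iff, Fin.forall_fin_two]

lemma add_one_ne_zero_of_mul_sq_eq {R : Type*} [CommRing R] [Nontrivial R] {a b : R}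
    (h : a * (b + 1) ^ 2 = b + 2) : b + 1 ≠ 0 := by
  intro hb
  have hb2 : b + 2 = 0 := by rw [← h, hb]; ring
  exact one_ne_zero (by linear_combination hb2 - hb)

lemma critical_system_iff_quadratic {K : Type*} [Field K] (L a b : K) :
    (a * (b + 1) ^ 2 - (b + 2) = 0 ∧ L * a * (b + 1) ^ 2 = b * (a * (2 * b + 2) - 1)) ↔
      (a * (b + 1) ^ 2 = b + 2 ∧ (L - 1) * (b * b) + 3 * (L - 1) * b + 2 * L = 0) := by
  rw [sub_eq_zero]
  refine and_congr_right fun hH => ?_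
  constructor
  · intro h
    linear_combination (b + 1) * h - (L * (b + 1) - 2 * b) * hH
  · intro h
    refine mul_left_cancel₀ (add_one_ne_zero_of_mul_sq_eq hH) ?_
    linear_combination h + (L * (b + 1) - 2 * b) * hH

section CriticalSystem

variable {K : Type*} [Field K] [CharZero K] {L S : K}

lemma quadratic_critical_iff (hL : L ≠ 1) (hS : S ^ 2 = L ^ 2 - 10 * L + 9) (b : K) :
    (L - 1) * (b * b) + 3 * (L - 1) * b + 2 * L = 0 ↔
      b = (3 - 3 * L + S) / (2 * (L - 1)) ∨ b = (3 - 3 * L - S) / (2 * (L - 1)) := by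
  have hdisc : discrim (L - 1) (3 * (L - 1)) (2 * L) = S * S := by
    rw [discrim]; linear_combination -hS
  rw [quadratic_eq_zero_iff (sub_ne_zero.2 hL) hdisc, show -(3 * (L - 1)) = 3 - 3 * L by ring]

lemma mul_sq_eq_iff_of_eq_root (hL : L ≠ 1) (hS : S ^ 2 = L ^ 2 - 10 * L + 9) {a b : K}
    (hb : b = (3 - 3 * L + S) / (2 * (L - 1))) :
    a * (b + 1) ^ 2 = b + 2 ↔ a = L ^ 2 / 8 + (L / 8 - 3 / 8) * S - L + 7 / 8 := by
  set c := L ^ 2 / 8 + (L / 8 - 3 / 8) * S - L + 7 / 8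
  have hL' : 2 * (L - 1) ≠ 0 := mul_ne_zero two_ne_zero (sub_ne_zero.2 hL)
  have hb' : 2 * (L - 1) * b = 3 - 3 * L + S := by rw [hb]; field_simp
  have hsq : 2 * (L - 1) * (b + 1) ^ 2 = L - 5 - S := by
    refine mul_left_cancel₀ hL' ?_
    linear_combination (2 * (L - 1) * b + L - 1 + S) * hb' + hS
  have hc : c * (L - 5 - S) = L - 1 + S := by
    simp only [c]; linear_combination (3 - L) / 8 * hS
  have hc' : c * (b + 1) ^ 2 = b + 2 := by
    refine mul_left_cancel₀ hL' ?_
    linear_combination c * hsq + hc - hb'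
  constructor
  · intro ha
    exact mul_right_cancel₀ (pow_ne_zero 2 (add_one_ne_zero_of_mul_sq_eq ha)) (ha.trans hc'.symm)
  · rintro rfl
    exact hc'

lemma critical_system_iff (hL : L ≠ 1) (hS : S ^ 2 = L ^ 2 - 10 * L + 9) (a b : K) :
    (a * (b + 1) ^ 2 - (b + 2) = 0 ∧ L * a * (b + 1) ^ 2 = b * (a * (2 * b + 2) - 1)) ↔
      (a = L ^ 2 / 8 + (L / 8 - 3 / 8) * S - L + 7 / 8 ∧ b = (3 - 3 * L + S) / (2 * (L - 1))) ∨
      (a = L ^ 2 / 8 - (L / 8 - 3 / 8) * S - L + 7 / 8 ∧ b = (3 - 3 * L - S) / (2 * (L - 1))) := by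
  rw [critical_system_iff_quadratic, quadratic_critical_iff hL hS, and_or_left]
  have hroot_neg {a b : K} :=
    mul_sq_eq_iff_of_eq_root (S := -S) (a := a) (b := b) hL (by rwa [neg_sq])
  simp only [← sub_eq_add_neg, mul_neg] at hroot_neg
  exact or_congr (and_congr_left (mul_sq_eq_iff_of_eq_root hL hS)) (and_congr_left hroot_neg)

end CriticalSystem

theorem basic_univariate_perturbed_critical_points_general
    (H : MvPolynomial (Fin 2) ℂ)
    (hH : H = -X 1 + (X 1) ^ 2 * X 0 - 2 + 2 * X 1 * X 0 + X 0)
    (l : ℝ) (hl1 : l < 1)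
    (s : ℝ) (hs : s = Real.sqrt (l ^ 2 - 10 * l + 9)) :
    ∀ x : Fin 2 → ℂ,
      (eval x H = 0 ∧
        (l : ℂ) * x 0 * eval x (pderiv 0 H) = x 1 * eval x (pderiv 1 H)) ↔
      (x = ![(l : ℂ) ^ 2 / 8 + ((l : ℂ) / 8 - 3 / 8) * (s : ℂ) - (l : ℂ) + 7 / 8,
              (3 - 3 * (l : ℂ) + (s : ℂ)) / (2 * ((l : ℂ) - 1))] ∨
       x = ![(l : ℂ) ^ 2 / 8 - ((l : ℂ) / 8 - 3 / 8) * (s : ℂ) - (l : ℂ) + 7 / 8,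
              (3 - 3 * (l : ℂ) - (s : ℂ)) / (2 * ((l : ℂ) - 1))]) := by
  have hL : (l : ℂ) ≠ 1 := by exact_mod_cast hl1.ne
  have hS : (s : ℂ) ^ 2 = l ^ 2 - 10 * l + 9 := by
    have hs2 : s ^ 2 = l ^ 2 - 10 * l + 9 := by rw [hs, Real.sq_sqrt (by nlinarith)]
    exact_mod_cast hs2
  intro x
  rw [hH, H_eq_factored, eval_H_factored, eval_pderiv_zero_H_factored, eval_pderiv_one_H_factored,
    eq_vec_two_iff, eq_vec_two_iff]
  exact critical_system_iff hL hS (x 0) (x 1)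

/-- For `0 < λ < 1` the critical points of `H(x₁,x₂) = -x₂ + x₂²x₁ - 2 + 2x₂x₁ + x₁` for
the direction `α = (1, λ)` are exactly the two points given in terms of
`s = √(λ² - 10λ + 9)`. -/
theorem basic_univariate_perturbed_critical_points
    (H : MvPolynomial (Fin 2) ℂ)
    (hH : H = -X 1 + (X 1) ^ 2 * X 0 - 2 + 2 * X 1 * X 0 + X 0)
    (l : ℝ) (hl0 : 0 < l) (hl1 : l < 1)
    (s : ℝ) (hs : s = Real.sqrt (l ^ 2 - 10 * l + 9)) :
    ∀ x : Fin 2 → ℂ,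
      (eval x H = 0 ∧
        (l : ℂ) * x 0 * eval x (pderiv 0 H) = x 1 * eval x (pderiv 1 H)) ↔
      (x = ![(l : ℂ) ^ 2 / 8 + ((l : ℂ) / 8 - 3 / 8) * (s : ℂ) - (l : ℂ) + 7 / 8,
              (3 - 3 * (l : ℂ) + (s : ℂ)) / (2 * ((l : ℂ) - 1))] ∨
       x = ![(l : ℂ) ^ 2 / 8 - ((l : ℂ) / 8 - 3 / 8) * (s : ℂ) - (l : ℂ) + 7 / 8,
              (3 - 3 * (l : ℂ) - (s : ℂ)) / (2 * ((l : ℂ) - 1))]) :=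
  basic_univariate_perturbed_critical_points_general H hH l hl1 s hs
end

section
/- Let F = G·H⁻¹ ∈ ℂ[[x₁,x₂,x₃]] where G = x₃x₁(3x₃ + 2 + x₁ + x₂x₁ + 2x₃²) and H = x₃ + 2 + x₁ + x₂x₁ (note H(0,0,0) = 2 ≠ 0). Then for all (a,b) ∈ ℕ², the Maclaurin coefficient f_{(a,b)} of the algebraic function f(x₁,x₂) = x₁·√(1 − x₁ − x₂) equals F_{(a+b, b, a+b)}; here f_{(a,b)} = 0 if a = 0, f_{(1,0)} = 1, and for a ≥ 1 with a + b ≥ 2, f_{(a,b)} = −C_{a+b−2}·binom(a+b−1, b)/(2·4^{a+b−2}), where C_m is the m-th Catalan number. -/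
open MvPolynomial

/-!
Since `G = x₀x₂(H + 2x₂ + 2x₂²)`, we have `F = x₀x₂ + 2x₀x₂²(1 + x₂)/H`. Write `H = 2 + s + t` with
`s = x₀(1 + x₁)` and `t = x₂`: the geometric series gives
`[sᵖtᵠ] 1/H = (-1)^(p+q) binom(p+q, p) / 2^(p+q+1)`, and expanding `sᵖ` contributes the factor
`binom(p, j)` to the coefficient of `x₀ᵖx₁ʲ`. On the diagonal `x₀ⁿx₁ᵇx₂ⁿ` with `n = m + 2` the two
surviving terms combine, by Pascal's rule, to a multiple of
`binom(2m, m+1) - binom(2m, m) = -C_m`.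
-/

noncomputable def expTriple (i j k : ℕ) : Fin 3 →₀ ℕ := Finsupp.equivFunOnFinite.symm ![i, j, k]

section ExpTriple

variable {i j k i' j' k' : ℕ}

@[simp] lemma expTriple_apply_zero : expTriple i j k 0 = i := rfl
@[simp] lemma expTriple_apply_one : expTriple i j k 1 = j := rfl
@[simp] lemma expTriple_apply_two : expTriple i j k 2 = k := rfl

lemma expTriple_eq_add_single :
    expTriple i j k = Finsupp.single 0 i + Finsupp.single 1 j + Finsupp.single 2 k := by
  ext s; fin_cases s <;> simp

lemma eq_expTriple (μ : Fin 3 →₀ ℕ) : μ = expTriple (μ 0) (μ 1) (μ 2) := by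
  ext s; fin_cases s <;> rfl

@[simp] lemma expTriple_inj :
    expTriple i j k = expTriple i' j' k' ↔ i = i' ∧ j = j' ∧ k = k' := by
  refine ⟨fun h => ⟨?_, ?_, ?_⟩, by rintro ⟨rfl, rfl, rfl⟩; rfl⟩
  exacts [congrArg (· 0) h, congrArg (· 1) h, congrArg (· 2) h]

@[simp] lemma expTriple_zero : expTriple 0 0 0 = 0 := by
  ext s; fin_cases s <;> rfl

lemma expTriple_le_expTriple :
    expTriple i' j' k' ≤ expTriple i j k ↔ i' ≤ i ∧ j' ≤ j ∧ k' ≤ k := by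
  simp [Finsupp.le_def, Fin.forall_fin_succ]

lemma expTriple_sub_expTriple :
    expTriple i j k - expTriple i' j' k' = expTriple (i - i') (j - j') (k - k') := by
  ext s; fin_cases s <;> rfl

end ExpTriple

@[simp, norm_cast]
lemma MvPolynomial.coe_ofNat {σ R : Type*} [CommSemiring R] (n : ℕ) [n.AtLeastTwo] :
    ((ofNat(n) : MvPolynomial σ R) : MvPowerSeries σ R) = ofNat(n) :=
  map_ofNat coeToMvPowerSeries.ringHom n

lemma Nat.choose_pred_add_ite {i : ℕ} (hi : 1 ≤ i) (j : ℕ) :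
    (i - 1).choose j + (if 1 ≤ j then (i - 1).choose (j - 1) else 0) = i.choose j := by
  obtain ⟨p, rfl⟩ := Nat.exists_eq_add_of_le' hi
  rcases j with _ | j
  · simp
  · simp [Nat.choose_succ_succ', add_comm]

lemma catalan_add_choose (m : ℕ) : catalan m + (2 * m).choose (m + 1) = (2 * m).choose m := by
  refine Nat.eq_of_mul_eq_mul_left m.succ_pos ?_
  have h := Nat.choose_succ_right_eq (2 * m) m
  rw [show 2 * m - m = m by omega] at h
  rw [mul_add, succ_mul_catalan_eq_centralBinom, Nat.centralBinom]
  linarith [h]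

section InvSumCoeff

variable {K : Type*} [Field K] {c : K}

/-- The coefficient of `sᵖ tᵠ` in `(c + s + t)⁻¹`. -/
def invSumCoeff (c : K) (p q : ℕ) : K := (-1) ^ (p + q) * (p + q).choose p / c ^ (p + q + 1)

lemma invSumCoeff_recurrence (hc : c ≠ 0) (p q : ℕ) :
    c * invSumCoeff c p q + (if 1 ≤ p then invSumCoeff c (p - 1) q else 0)
      + (if 1 ≤ q then invSumCoeff c p (q - 1) else 0) = if p = 0 ∧ q = 0 then 1 else 0 := by
  rcases p with _ | p <;> rcases q with _ | q
  · simp [invSumCoeff, hc]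
  · simp [invSumCoeff, pow_succ]
    field_simp
    ring
  · simp [invSumCoeff, pow_succ]
    field_simp
    ring
  · simp only [invSumCoeff, add_tsub_cancel_right, le_add_iff_nonneg_left, zero_le, if_true,
      Nat.add_eq_zero_iff, one_ne_zero, and_false, if_false]
    rw [show p + 1 + (q + 1) = p + q + 1 + 1 by ring, show p + (q + 1) = p + q + 1 by ring,
      Nat.choose_succ_succ', add_right_comm p 1 q]
    push_cast
    simp only [pow_succ]
    field_simp
    ring

lemma two_mul_invSumCoeff_two_add_eq_neg_catalan [NeZero (2 : K)] (m : ℕ) :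
    2 * invSumCoeff (2 : K) (m + 1) m
      + (if 1 ≤ m then 2 * invSumCoeff (2 : K) (m + 1) (m - 1) else 0)
      = -catalan m / (2 * 4 ^ m) := by
  rcases m with _ | n
  · simp only [invSumCoeff]
    field_simp
    norm_num
  · have hcat : (catalan (n + 1) : K) + (2 * n + 2).choose (n + 1 + 1)
        = (2 * n + 2).choose (n + 1) := by
      rw [← Nat.cast_add, show 2 * n + 2 = 2 * (n + 1) by ring, catalan_add_choose]
    have hpascal : ((2 * n + 2 + 1).choose (n + 1 + 1) : K) =
        (2 * n + 2).choose (n + 1) + (2 * n + 2).choose (n + 1 + 1) := by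
      rw [← Nat.cast_add, Nat.choose_succ_succ']
    simp only [invSumCoeff, le_add_iff_nonneg_left, zero_le, if_true, add_tsub_cancel_right]
    rw [show n + 1 + 1 + (n + 1) = 2 * n + 2 + 1 by ring, show n + 1 + 1 + n = 2 * n + 2 by ring,
      Odd.neg_one_pow ⟨n + 1, by ring⟩, Even.neg_one_pow ⟨n + 1, by ring⟩, hpascal,
      show (4 : K) = 2 ^ 2 by norm_num, ← pow_mul, ← hcat]
    field_simp
    ring

end InvSumCoeff

namespace MvPowerSeries

section Monomial

variable {R : Type*} [CommSemiring R]

lemma monomial_expTriple (i j k : ℕ) (a : R) :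
    monomial (expTriple i j k) a = C a * X 0 ^ i * X 1 ^ j * X 2 ^ k := by
  simp only [expTriple_eq_add_single, X_pow_eq, ← monomial_zero_eq_C_apply,
    monomial_mul_monomial, zero_add, mul_one]

lemma coeff_expTriple_monomial_mul (φ : MvPowerSeries (Fin 3) R) (i j k i' j' k' : ℕ) (a : R) :
    coeff (expTriple i j k) (monomial (expTriple i' j' k') a * φ) =
      if i' ≤ i ∧ j' ≤ j ∧ k' ≤ k then a * coeff (expTriple (i - i') (j - j') (k - k')) φ
      else 0 := by
  simp only [coeff_monomial_mul, expTriple_le_expTriple, expTriple_sub_expTriple]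

end Monomial

variable {K : Type*} [Field K] {c : K}

/-- The expansion of `(c + s + t)⁻¹` at `s = x₀(1 + x₁)`, `t = x₂`. -/
noncomputable def invSumSeries (c : K) : MvPowerSeries (Fin 3) K :=
  fun μ => invSumCoeff c (μ 0) (μ 2) * (μ 0).choose (μ 1)

lemma coeff_invSumSeries (μ : Fin 3 →₀ ℕ) :
    coeff μ (invSumSeries c) = invSumCoeff c (μ 0) (μ 2) * (μ 0).choose (μ 1) := rfl

lemma mul_invSumSeries (hc : c ≠ 0) : (C c + X 0 + X 0 * X 1 + X 2) * invSumSeries c = 1 := by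
  have h : (C c + X 0 + X 0 * X 1 + X 2 : MvPowerSeries (Fin 3) K) = monomial (expTriple 0 0 0) c
      + monomial (expTriple 1 0 0) 1 + monomial (expTriple 1 1 0) 1
      + monomial (expTriple 0 0 1) 1 := by
    simp only [monomial_expTriple, map_one]
    ring
  ext μ
  obtain ⟨i, j, k, rfl⟩ : ∃ i j k, μ = expTriple i j k := ⟨_, _, _, eq_expTriple μ⟩
  simp only [h, add_mul, map_add, coeff_expTriple_monomial_mul, coeff_invSumSeries, coeff_one,
    expTriple_apply_zero, expTriple_apply_one, expTriple_apply_two, zero_le, true_and, and_true,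
    if_true, tsub_zero, one_mul, ← expTriple_zero, expTriple_inj]
  have hpascal : ((if 1 ≤ i then invSumCoeff c (i - 1) k * ((i - 1).choose j : K) else 0)
      + if 1 ≤ i ∧ 1 ≤ j then invSumCoeff c (i - 1) k * ((i - 1).choose (j - 1) : K) else 0)
      = (if 1 ≤ i then invSumCoeff c (i - 1) k else 0) * i.choose j := by
    by_cases hi : 1 ≤ i
    · simp only [hi, true_and, if_true, ← Nat.choose_pred_add_ite hi j]
      split_ifs <;> push_cast <;> ring
    · simp [hi]
  calc _ = (i.choose j : K) * (c * invSumCoeff c i k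
        + (if 1 ≤ i then invSumCoeff c (i - 1) k else 0)
        + if 1 ≤ k then invSumCoeff c i (k - 1) else 0) := by
        rw [add_assoc (c * _), hpascal]
        split_ifs <;> ring
    _ = _ := by
      rw [invSumCoeff_recurrence hc]
      rcases j with _ | j <;> split_ifs <;> simp_all

lemma coeff_expTriple_diagonal [NeZero (2 : K)] (a b : ℕ) :
    coeff (expTriple (a + b) b (a + b)) (monomial (expTriple 1 0 1) 1
        + monomial (expTriple 1 0 2) 2 * invSumSeries 2
        + monomial (expTriple 1 0 3) (2 : K) * invSumSeries 2) =
      if a = 0 then 0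
      else if a = 1 ∧ b = 0 then 1
      else -(catalan (a + b - 2) : K) * (a + b - 1).choose b / (2 * 4 ^ (a + b - 2)) := by
  simp only [map_add, coeff_expTriple_monomial_mul, coeff_monomial, coeff_invSumSeries,
    expTriple_inj, expTriple_apply_zero, expTriple_apply_one, expTriple_apply_two]
  by_cases ha : a = 0
  · subst ha
    rcases b with _ | b <;> simp
  by_cases hab : a = 1 ∧ b = 0
  · obtain ⟨rfl, rfl⟩ := hab
    simp
  obtain ⟨m, hm⟩ : ∃ m, a + b = m + 2 := ⟨a + b - 2, by omega⟩
  have h1 : ¬(m + 2 = 1 ∧ b = 0 ∧ m + 2 = 1) := by omega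
  have h3 : 3 ≤ m + 2 ↔ 1 ≤ m := by omega
  have hdiag := two_mul_invSumCoeff_two_add_eq_neg_catalan (K := K) m
  rw [if_neg ha, if_neg hab, hm, if_neg h1]
  simp only [add_tsub_cancel_right, show m + 2 - 1 = m + 1 by omega,
    show m + 2 - 3 = m - 1 by omega, h3, tsub_zero, zero_le, le_add_iff_nonneg_left, true_and,
    if_true]
  split_ifs at hdiag ⊢ <;> linear_combination ((m + 1).choose b : K) * hdiag

end MvPowerSeries

/-- The Maclaurin coefficients of `f(x₁,x₂) = x₁√(1-x₁-x₂)` equal the coefficients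
`F_{(a+b, b, a+b)}` of the trivariate rational function `F = G/H` produced by Safonov's
procedure.  Explicitly, `f_{(0,b)} = 0`, `f_{(1,0)} = 1`, and
`f_{(a,b)} = -C_{a+b-2}·binom(a+b-1, b)/(2·4^{a+b-2})` for `a ≥ 1` with `a + b ≥ 2`. -/
theorem basic_bivariate_diagonal
    (G H : MvPolynomial (Fin 3) ℂ)
    (hG : G = X 2 * X 0 * (3 * X 2 + 2 + X 0 + X 1 * X 0 + 2 * (X 2) ^ 2))
    (hH : H = X 2 + 2 + X 0 + X 1 * X 0)
    (F : MvPowerSeries (Fin 3) ℂ)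
    (hF : F = (G : MvPowerSeries (Fin 3) ℂ) * (H : MvPowerSeries (Fin 3) ℂ)⁻¹) :
    ∀ a b : ℕ,
      MvPowerSeries.coeff (Finsupp.equivFunOnFinite.symm ![a + b, b, a + b]) F =
        if a = 0 then 0
        else if a = 1 ∧ b = 0 then 1
        else -(catalan (a + b - 2) : ℂ) * (Nat.choose (a + b - 1) b : ℂ) /
          (2 * 4 ^ (a + b - 2)) := by
  have hHΨ : (H : MvPowerSeries (Fin 3) ℂ) * MvPowerSeries.invSumSeries 2 = 1 := by
    rw [← MvPowerSeries.mul_invSumSeries (two_ne_zero' ℂ), hH]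
    push_cast
    rw [map_ofNat]
    ring
  have hH0 : MvPowerSeries.constantCoeff (H : MvPowerSeries (Fin 3) ℂ) ≠ 0 :=
    left_ne_zero_of_mul_eq_one (by rw [← map_mul, hHΨ, map_one])
  have hF' : F = MvPowerSeries.monomial (expTriple 1 0 1) 1
      + MvPowerSeries.monomial (expTriple 1 0 2) 2 * MvPowerSeries.invSumSeries 2
      + MvPowerSeries.monomial (expTriple 1 0 3) 2 * MvPowerSeries.invSumSeries 2 := by
    rw [hF, (MvPowerSeries.inv_eq_iff_mul_eq_one hH0).2 (by rwa [mul_comm]), hG]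
    rw [hH] at hHΨ
    simp only [MvPowerSeries.monomial_expTriple, map_one, map_ofNat]
    push_cast at hHΨ ⊢
    linear_combination (MvPowerSeries.X 0 * MvPowerSeries.X 2) * hHΨ
  intro a b
  rw [hF']
  exact MvPowerSeries.coeff_expTriple_diagonal a b
end

section
/- Let F = G·H⁻¹ ∈ ℂ[[x₁,x₂,x₃]] where G = x₃x₁(−3x₃ + 3x₃²x₁ + 3x₃²x₁x₂ − 2 + 2x₃x₁ + 2x₃x₁x₂ + x₁ + x₁x₂ − 2x₃² + 2x₃³x₁ + 2x₃³x₁x₂) and H = −x₃ + x₃²x₁ + x₃²x₁x₂ − 2 + 2x₃x₁ + 2x₃x₁x₂ + x₁ + x₁x₂ (note H(0,0,0) = −2 ≠ 0). Then for all (a,b) ∈ ℕ², the Maclaurin coefficient f_{(a,b)} of the algebraic function f(x₁,x₂) = x₁/√(1 − x₁ − x₂) equals F_{(a+b, b, a+b)}; here f_{(a,b)} = 0 if a = 0, and for a ≥ 1, f_{(a,b)} = binom(2(a+b−1), a+b−1)·binom(a+b−1, b)/4^{a+b−1}. -/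
/-!
Write `x, y, u` for the three variables and `q = (2 + u)⁻¹`. Then
`H = x(1+y)(1+u)² - (2+u) = (2+u)(r - 1)` with `r = x(1+y)(1+u)²q` and
`G = xu(x(1+y)(1+u)(2u²+u+1) - (2u²+3u+2))`, so `D = F - xu(2u²+3u+2)q` satisfies
`D(1 - r) = 2x²(1+y)u²(1+u)q²`. Expanding `D` as a geometric series in `r`, up to a multiple of
a high power of `x`, the coefficient of `x^(n+1) y^b u^(n+1)` comes from a single term and equals
`binom(n, b)` times a coefficient of a series in `u` alone. That coefficient is computed with
`2(1+u) = (2+u)(1+uq)`, which turns `(1+u)^(2n+1) q^(n+2)` into a finite sum of terms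
`u^j (2+u)^(2n+1) q^(n+2+j)`, of which only `j = n` reaches `u^n`.
-/

theorem pow_mul_pow_of_mul_eq_one {M : Type*} [CommMonoid M] {p q : M} (h : p * q = 1)
    {a b : ℕ} (hba : b ≤ a) : p ^ a * q ^ b = p ^ (a - b) := by
  rw [← Nat.sub_add_cancel hba, pow_add, mul_assoc, pow_mul_pow_eq_one b h, mul_one,
    Nat.add_sub_cancel]

theorem Nat.centralBinom_succ_eq_two_mul_choose (n : ℕ) :
    (n + 1).centralBinom = 2 * (2 * n + 1).choose n := by
  rw [Nat.centralBinom_eq_two_mul_choose, show 2 * (n + 1) = 2 * n + 1 + 1 by ring,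
    Nat.choose_succ_succ', Nat.choose_symm_half]
  ring

theorem eq_sum_mul_pow_add_mul_pow {A : Type*} [CommRing A] {D r c : A} (h : D * (1 - r) = c)
    (N : ℕ) : D = ∑ m ∈ Finset.range N, c * r ^ m + D * r ^ N := by
  rw [← Finset.mul_sum, ← h]
  linear_combination (-D) * geom_sum_mul_neg r N

namespace MvPolynomial

variable {σ R : Type*} [CommRing R]

@[simp, norm_cast]
theorem coe_neg (φ : MvPolynomial σ R) : ((-φ : MvPolynomial σ R) : MvPowerSeries σ R) = -φ :=
  map_neg coeToMvPowerSeries.ringHom φ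

@[simp, norm_cast]
theorem coe_sub (φ ψ : MvPolynomial σ R) :
    ((φ - ψ : MvPolynomial σ R) : MvPowerSeries σ R) = φ - ψ :=
  map_sub coeToMvPowerSeries.ringHom φ ψ

@[simp, norm_cast]
theorem coe_ofNat_s17 (n : ℕ) [n.AtLeastTwo] :
    ((ofNat(n) : MvPolynomial σ R) : MvPowerSeries σ R) = ofNat(n) :=
  map_ofNat coeToMvPowerSeries.ringHom n

end MvPolynomial

namespace PowerSeries

variable {k : Type*} [Field k]

theorem two_add_X_mul_inv [CharZero k] : (2 + X : k⟦X⟧) * (2 + X)⁻¹ = 1 :=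
  PowerSeries.mul_inv_cancel _ (by simp [map_ofNat])

theorem constantCoeff_inv_two_add_X : constantCoeff (2 + X : k⟦X⟧)⁻¹ = 2⁻¹ := by
  simp [map_ofNat]

theorem coeff_C_add_X_pow_of_lt {R : Type*} [CommSemiring R] (c : R) {d n : ℕ} (h : d < n) :
    coeff n ((C c + X : R⟦X⟧) ^ d) = 0 := by
  have hpoly : (C c + X : R⟦X⟧) ^ d = ((Polynomial.X + Polynomial.C c) ^ d : Polynomial R) := by
    push_cast
    ring
  rw [hpoly, Polynomial.coeff_coe, Polynomial.coeff_X_add_C_pow, Nat.choose_eq_zero_of_lt h,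
    Nat.cast_zero, mul_zero]

theorem coeff_X_pow_mul_two_add_X_pow_mul_inv_pow [CharZero k] (n j : ℕ) :
    coeff n (X ^ j * ((2 + X : k⟦X⟧) ^ (2 * n + 1) * (2 + X)⁻¹ ^ (n + 2 + j))) =
      if j = n then 2⁻¹ else 0 := by
  rw [coeff_X_pow_mul']
  rcases lt_trichotomy j n with hjn | rfl | hnj
  · rw [if_pos hjn.le, if_neg hjn.ne, pow_mul_pow_of_mul_eq_one two_add_X_mul_inv (by omega),
      ← map_ofNat C 2]
    exact coeff_C_add_X_pow_of_lt 2 (by omega)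
  · rw [if_pos le_rfl, if_pos rfl, Nat.sub_self, coeff_zero_eq_constantCoeff_apply,
      show j + 2 + j = 2 * j + 1 + 1 by ring, pow_succ (2 + X : k⟦X⟧)⁻¹, ← mul_assoc, ← mul_pow,
      two_add_X_mul_inv, one_pow, one_mul, constantCoeff_inv_two_add_X]
  · rw [if_neg (by omega), if_neg hnj.ne']

theorem coeff_two_mul_one_add_X_pow_mul_inv_two_add_X_pow [CharZero k] (n : ℕ) :
    coeff n (2 * (1 + X : k⟦X⟧) ^ (2 * n + 1) * (2 + X)⁻¹ ^ (n + 2)) =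
      ((n + 1).centralBinom : k) / 4 ^ (n + 1) := by
  have hexpand : C ((2 : k) ^ (2 * n + 1)) * ((1 + X) ^ (2 * n + 1) * (2 + X)⁻¹ ^ (n + 2)) =
      ∑ j ∈ Finset.range (2 * n + 2), C ((2 * n + 1).choose j : k) *
        (X ^ j * ((2 + X) ^ (2 * n + 1) * (2 + X)⁻¹ ^ (n + 2 + j))) := by
    have h2 : C (2 : k) * (1 + X) = (2 + X) * (X * (2 + X)⁻¹ + 1) := by
      rw [map_ofNat]
      linear_combination (-X : k⟦X⟧) * two_add_X_mul_inv (k := k)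
    rw [map_pow, ← mul_assoc, ← mul_pow, h2, mul_pow, add_pow (X * (2 + X)⁻¹) 1, Finset.mul_sum,
      Finset.sum_mul]
    refine Finset.sum_congr rfl fun j _ => ?_
    rw [one_pow, mul_one, map_natCast]
    ring
  have hcoeff := congrArg (coeff n) hexpand
  simp only [coeff_C_mul, map_sum, coeff_X_pow_mul_two_add_X_pow_mul_inv_pow, mul_ite, mul_zero,
    Finset.sum_ite_eq', Finset.mem_range, show n < 2 * n + 2 by omega, if_true] at hcoeff
  rw [mul_assoc, two_mul, map_add, ← two_mul, Nat.centralBinom_succ_eq_two_mul_choose,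
    eq_div_iff (by norm_num), show (4 : k) ^ (n + 1) = 2 ^ (2 * n + 1) * 2 by
      rw [pow_succ, pow_succ, pow_mul]; norm_num; ring]
  push_cast
  linear_combination 4 * hcoeff

end PowerSeries

namespace MvPowerSeries

theorem coeff_X_pow_mul_of_lt {σ R : Type*} [CommSemiring R] {s : σ} {e : ℕ}
    (φ : MvPowerSeries σ R) {n : σ →₀ ℕ} (h : n s < e) : coeff n (X s ^ e * φ) = 0 := by
  rw [X_pow_eq, coeff_monomial_mul, if_neg]
  intro hle
  simpa using (hle s).trans_lt h

theorem coeff_rename_const {σ R : Type*} [DecidableEq σ] [CommSemiring R] (i : σ)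
    (ψ : PowerSeries R) (n : σ →₀ ℕ) :
    coeff n (rename (fun _ : Unit ↦ i) ψ) =
      if n = Finsupp.single i (n i) then PowerSeries.coeff (n i) ψ else 0 := by
  split_ifs with hn
  · have hemb : n = Finsupp.embDomain (Function.Embedding.punit i) (Finsupp.single () (n i)) := by
      rwa [Finsupp.embDomain_single]
    conv_lhs => rw [hemb]
    exact coeff_embDomain_rename (Function.Embedding.punit i) ψ _
  · refine coeff_rename_eq_zero _ ψ ?_
    rintro ⟨d, rfl⟩
    rw [Finsupp.unique_single d, Finsupp.mapDomain_single, Finsupp.single_eq_same] at hn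
    exact hn rfl

variable {R : Type*} [CommSemiring R]

noncomputable abbrev ofLastVar : PowerSeries R →ₐ[R] MvPowerSeries (Fin 3) R :=
  rename fun _ : Unit ↦ 2

theorem ofLastVar_X : ofLastVar (PowerSeries.X : PowerSeries R) = X 2 :=
  rename_X _ ()

theorem coeff_X_zero_pow_mul_X_one_pow_mul_ofLastVar (e c : ℕ) (ψ : PowerSeries R) (i j k : ℕ) :
    coeff (Finsupp.equivFunOnFinite.symm ![i, j, k]) (X 0 ^ e * X 1 ^ c * ofLastVar ψ) =
      if e = i ∧ c = j then PowerSeries.coeff k ψ else 0 := by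
  rw [X_pow_eq, X_pow_eq, monomial_mul_monomial, one_mul, coeff_monomial_mul, coeff_rename_const]
  simp only [Finsupp.le_def, Finsupp.ext_iff, Fin.forall_fin_succ, Finsupp.coe_add,
    Finsupp.coe_tsub, Pi.add_apply, Pi.sub_apply, Finsupp.single_apply,
    Finsupp.coe_equivFunOnFinite_symm, Matrix.cons_val_zero, Matrix.cons_val_one,
    Fin.succ_zero_eq_one, Fin.succ_one_eq_two, Fin.reduceEq, ↓reduceIte, IsEmpty.forall_iff,
    and_true, one_mul, mul_ite, mul_zero]
  split_ifs <;> first | rfl | omega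

theorem coeff_X_zero_pow_mul_one_add_X_one_pow_mul_ofLastVar (e f : ℕ) (ψ : PowerSeries R)
    (i j k : ℕ) :
    coeff (Finsupp.equivFunOnFinite.symm ![i, j, k]) (X 0 ^ e * (1 + X 1) ^ f * ofLastVar ψ) =
      if e = i then f.choose j * PowerSeries.coeff k ψ else 0 := by
  have hbinom : X 0 ^ e * (1 + X 1) ^ f * ofLastVar ψ = ∑ c ∈ Finset.range (f + 1),
      C (f.choose c : R) * (X 0 ^ e * X 1 ^ c * ofLastVar ψ) := by
    rw [add_comm, add_pow, Finset.mul_sum, Finset.sum_mul]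
    refine Finset.sum_congr rfl fun c _ => ?_
    rw [one_pow, mul_one, map_natCast]
    ring
  simp only [hbinom, map_sum, coeff_C_mul, coeff_X_zero_pow_mul_X_one_pow_mul_ofLastVar, ite_and,
    mul_ite, mul_zero]
  split_ifs with he
  · rw [Finset.sum_ite_eq']
    split_ifs with hj
    · rfl
    · rw [Nat.choose_eq_zero_of_lt (by simpa using hj), Nat.cast_zero, zero_mul]
  · simp

end MvPowerSeries

namespace Safonov

open MvPowerSeries

variable {k : Type*} [Field k] [CharZero k]

noncomputable def numerator : MvPowerSeries (Fin 3) k :=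
  X 0 * X 2 *
    (X 0 * (1 + X 1) * ((1 + X 2) * (2 * X 2 ^ 2 + X 2 + 1)) - (2 * X 2 ^ 2 + 3 * X 2 + 2))

noncomputable def denominator : MvPowerSeries (Fin 3) k :=
  X 0 * (1 + X 1) * (1 + X 2) ^ 2 - (2 + X 2)

theorem constantCoeff_eq_zero {F : MvPowerSeries (Fin 3) k}
    (hF : F * denominator = numerator) : constantCoeff F = 0 := by
  simpa [numerator, denominator, map_ofNat] using congrArg constantCoeff hF

theorem exists_eq_add_sum_add_X_zero_pow_mul {F : MvPowerSeries (Fin 3) k}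
    (hF : F * denominator = numerator) (N : ℕ) : ∃ Z, F =
      X 0 * ofLastVar (PowerSeries.X * (2 * PowerSeries.X ^ 2 + 3 * PowerSeries.X + 2) *
        (2 + PowerSeries.X)⁻¹) +
      ∑ m ∈ Finset.range N, X 0 ^ (m + 2) * (1 + X 1) ^ (m + 1) *
        ofLastVar (PowerSeries.X ^ 2 * (2 * (1 + PowerSeries.X) ^ (2 * m + 1) *
          (2 + PowerSeries.X)⁻¹ ^ (m + 2))) +
      X 0 ^ N * Z := by
  have hq : (2 + X 2 : MvPowerSeries (Fin 3) k) * ofLastVar (2 + PowerSeries.X)⁻¹ = 1 := by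
    rw [← ofLastVar_X, ← map_ofNat (ofLastVar (R := k)) 2, ← map_add,
      ← map_mul, PowerSeries.two_add_X_mul_inv, map_one]
  simp only [map_mul, map_add, map_pow, map_ofNat, map_one, ofLastVar_X]
  set q := ofLastVar (R := k) (2 + PowerSeries.X)⁻¹
  set D := F - X 0 * (X 2 * (2 * X 2 ^ 2 + 3 * X 2 + 2) * q)
  set r := X 0 * (1 + X 1) * ((1 + X 2) ^ 2 * q)
  have hD : D * (1 - r) = X 0 * (X 0 * (1 + X 1)) * (2 * X 2 ^ 2 * (1 + X 2) * q ^ 2) := by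
    simp only [denominator, numerator] at hF
    linear_combination (-q) * hF + (-F + X 0 * X 2 * (X 0 * (1 + X 1)) * q *
      ((1 + X 2) * (2 * X 2 ^ 2 + X 2 + 1))) * hq
  have hterm : ∀ m : ℕ, X 0 * (X 0 * (1 + X 1)) * (2 * X 2 ^ 2 * (1 + X 2) * q ^ 2) * r ^ m =
      X 0 ^ (m + 2) * (1 + X 1) ^ (m + 1) *
        (X 2 ^ 2 * (2 * (1 + X 2) ^ (2 * m + 1) * q ^ (m + 2))) := by
    intro m
    rw [mul_pow, mul_pow, mul_pow, ← pow_mul]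
    ring
  have htail : D * r ^ N = X 0 ^ N * ((1 + X 1) ^ N * ((1 + X 2) ^ 2 * q) ^ N * D) := by
    rw [mul_pow, mul_pow]
    ring
  refine ⟨(1 + X 1) ^ N * ((1 + X 2) ^ 2 * q) ^ N * D, ?_⟩
  rw [← Finset.sum_congr rfl fun m _ => hterm m, ← htail]
  linear_combination eq_sum_mul_pow_add_mul_pow hD N

theorem coeff_diagonal_succ {F : MvPowerSeries (Fin 3) k}
    (hF : F * denominator = numerator) (n b : ℕ) :
    coeff (Finsupp.equivFunOnFinite.symm ![n + 1, b, n + 1]) F =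
      n.choose b * n.centralBinom / 4 ^ n := by
  obtain ⟨Z, hZ⟩ := exists_eq_add_sum_add_X_zero_pow_mul hF (n + 2)
  have hlead : ∀ ψ : PowerSeries k, X 0 * ofLastVar ψ = X 0 ^ 1 * (1 + X 1) ^ 0 * ofLastVar ψ :=
    fun ψ => by ring
  rw [hZ, hlead, map_add, map_add, coeff_X_pow_mul_of_lt _ (by simp), add_zero, map_sum]
  simp only [coeff_X_zero_pow_mul_one_add_X_one_pow_mul_ofLastVar]
  rcases n with _ | n
  · rw [if_pos rfl, Finset.sum_eq_zero fun m _ => if_neg (by omega), add_zero,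
      Nat.centralBinom_zero, mul_assoc, PowerSeries.coeff_succ_X_mul,
      PowerSeries.coeff_zero_eq_constantCoeff_apply]
    simp [map_ofNat]
  · rw [if_neg (by omega), zero_add, Finset.sum_eq_single n (fun m _ hm => if_neg (by omega))
      (fun h => absurd (Finset.mem_range.2 (by omega)) h), if_pos rfl,
      show n + 1 + 1 = n + 2 by rfl, PowerSeries.coeff_X_pow_mul,
      PowerSeries.coeff_two_mul_one_add_X_pow_mul_inv_two_add_X_pow, mul_div_assoc]

end Safonov

open MvPolynomial

/-- The Maclaurin coefficients of `f(x₁,x₂) = x₁/√(1-x₁-x₂)` equal the coefficients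
`F_{(a+b, b, a+b)}` of the trivariate rational function `F = G/H` produced by Safonov's
procedure.  Explicitly, `f_{(0,b)} = 0` and
`f_{(a,b)} = binom(2(a+b-1), a+b-1)·binom(a+b-1, b)/4^{a+b-1}` for `a ≥ 1`. -/
theorem another_basic_bivariate_diagonal
    (G H : MvPolynomial (Fin 3) ℂ)
    (hG : G = X 2 * X 0 * (-3 * X 2 + 3 * (X 2) ^ 2 * X 0 + 3 * (X 2) ^ 2 * X 0 * X 1
      - 2 + 2 * X 2 * X 0 + 2 * X 2 * X 0 * X 1 + X 0 + X 0 * X 1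
      - 2 * (X 2) ^ 2 + 2 * (X 2) ^ 3 * X 0 + 2 * (X 2) ^ 3 * X 0 * X 1))
    (hH : H = -X 2 + (X 2) ^ 2 * X 0 + (X 2) ^ 2 * X 0 * X 1 - 2 + 2 * X 2 * X 0
      + 2 * X 2 * X 0 * X 1 + X 0 + X 0 * X 1)
    (F : MvPowerSeries (Fin 3) ℂ)
    (hF : F = (G : MvPowerSeries (Fin 3) ℂ) * (H : MvPowerSeries (Fin 3) ℂ)⁻¹) :
    ∀ a b : ℕ,
      MvPowerSeries.coeff (Finsupp.equivFunOnFinite.symm ![a + b, b, a + b]) F =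
        if a = 0 then 0
        else (Nat.choose (2 * (a + b - 1)) (a + b - 1) : ℂ) *
          (Nat.choose (a + b - 1) b : ℂ) / 4 ^ (a + b - 1) := by
  have hHs : (H : MvPowerSeries (Fin 3) ℂ) = Safonov.denominator := by
    rw [hH, Safonov.denominator]
    push_cast
    ring
  have hGs : (G : MvPowerSeries (Fin 3) ℂ) = Safonov.numerator := by
    rw [hG, Safonov.numerator]
    push_cast
    ring
  have hFH : F * Safonov.denominator = Safonov.numerator := by
    rw [hF, hHs, hGs, mul_assoc, MvPowerSeries.inv_mul_cancel, mul_one]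
    simp [Safonov.denominator, map_ofNat]
  intro a b
  rcases Nat.eq_zero_or_pos a with rfl | ha
  · rcases b with _ | n
    · rw [if_pos rfl, show Finsupp.equivFunOnFinite.symm ![0 + 0, 0, 0 + 0] = 0 by
          ext i; fin_cases i <;> rfl,
        MvPowerSeries.coeff_zero_eq_constantCoeff_apply, Safonov.constantCoeff_eq_zero hFH]
    · rw [zero_add, Safonov.coeff_diagonal_succ hFH, Nat.choose_eq_zero_of_lt n.lt_succ_self]
      simp
  · obtain ⟨n, hn⟩ : ∃ n, a + b = n + 1 := ⟨a + b - 1, by omega⟩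
    rw [if_neg ha.ne', hn, Safonov.coeff_diagonal_succ hFH, Nat.add_sub_cancel,
      Nat.centralBinom_eq_two_mul_choose]
    ring
end
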